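/- arXiv:2603.18759 — 14 statements merged into one kernel-verified Lean document; each statement's English description precedes it below -/
import Mathlib

section
/- For every n ≥ 2, the poset F_n has dimension exactly n: there exists a family of n linear extensions of F_n that realizes F_n, and no family of n−1 linear extensions of F_n realizes F_n. -/
/-- `r` is a linear extension of `le`: a linear order on `P` extending `le`. -/
def IsLinExt {P : Type*} (le r : P → P → Prop) : Prop :=
  IsLinearOrder P r ∧ ∀ x y, le x y → r x y

/-- The family `L` of linear extensions of `le` realizes `le`. -/
def RealizedBy {P ι : Type*} (le : P → P → Prop) (L : ι → P → P → Prop) : Prop :=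
  (∀ i, IsLinExt le (L i)) ∧ ∀ x y, le x y ↔ ∀ i, L i x y

/-- The strict order of the standard example `F n`: `a i ≺ b j` iff `i ≠ j`,
where `a i = Sum.inl i` and `b j = Sum.inr j`. -/
def FnLt (n : ℕ) (u v : Fin n ⊕ Fin n) : Prop :=
  ∃ i j : Fin n, i ≠ j ∧ u = Sum.inl i ∧ v = Sum.inr j

/-- The partial order of the standard example `F n`. -/
def FnLe (n : ℕ) (u v : Fin n ⊕ Fin n) : Prop :=
  u = v ∨ FnLt n u v

/-- Key function for the `i`-th linear extension. -/
def fkey (n : ℕ) (i : Fin n) : (Fin n ⊕ Fin n) → ℕ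
  | Sum.inl j => if j = i then n + 1 else (j : ℕ)
  | Sum.inr j => if j = i then n else n + 2 + (j : ℕ)

lemma fkey_inj (n : ℕ) (i : Fin n) : Function.Injective (fkey n i) := by
  rintro (a | a) (b | b) h <;>
  · have ha := a.isLt
    have hb := b.isLt
    simp only [fkey] at h
    split_ifs at h with h1 h2 <;>
      first
        | (subst h1; subst h2; rfl)
        | exact absurd h (by omega)
        | exact congrArg Sum.inl (Fin.ext h)
        | exact congrArg Sum.inr (Fin.ext (by omega))

/-- For every `n ≥ 2` the poset `F n` has dimension exactly `n`: some family of `n`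
linear extensions realizes it, and no family of `n - 1` linear extensions does. -/
theorem stmt1 (n : ℕ) (hn : 2 ≤ n) :
    (∃ L : Fin n → (Fin n ⊕ Fin n) → (Fin n ⊕ Fin n) → Prop, RealizedBy (FnLe n) L) ∧
    (∀ L : Fin (n - 1) → (Fin n ⊕ Fin n) → (Fin n ⊕ Fin n) → Prop,
      ¬ RealizedBy (FnLe n) L) := by
  constructor
  · refine ⟨fun i x y => fkey n i x ≤ fkey n i y, ?_, ?_⟩
    · intro i
      constructor
      · show IsLinearOrder (Fin n ⊕ Fin n) (fun x y => fkey n i x ≤ fkey n i y)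
        haveI h1 : IsRefl _ (fun x y => fkey n i x ≤ fkey n i y) := ⟨fun x => le_refl _⟩
        haveI h2 : IsTrans _ (fun x y => fkey n i x ≤ fkey n i y) := ⟨fun x y z => le_trans⟩
        haveI h3 : IsAntisymm _ (fun x y => fkey n i x ≤ fkey n i y) :=
          ⟨fun x y hxy hyx => fkey_inj n i (le_antisymm hxy hyx)⟩
        haveI h4 : IsTotal _ (fun x y => fkey n i x ≤ fkey n i y) := ⟨fun x y => le_total _ _⟩
        haveI h5 : IsPreorder _ (fun x y => fkey n i x ≤ fkey n i y) := ⟨⟩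
        haveI h6 : IsPartialOrder _ (fun x y => fkey n i x ≤ fkey n i y) := ⟨⟩
        exact ⟨⟩
      · rintro x y (rfl | ⟨j, k, hjk, rfl, rfl⟩)
        · exact le_refl _
        · have hjk' : (j : ℕ) ≠ (k : ℕ) := fun h => hjk (Fin.ext h)
          have hj := j.isLt
          have hk := k.isLt
          simp only [fkey]
          split_ifs with h1 h2 h2 <;> omega
    · intro x y
      constructor
      · rintro (rfl | ⟨j, k, hjk, rfl, rfl⟩) i
        · exact le_refl _
        · have hjk' : (j : ℕ) ≠ (k : ℕ) := fun h => hjk (Fin.ext h)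
          have hj := j.isLt
          have hk := k.isLt
          simp only [fkey]
          split_ifs with h1 h2 h2 <;> omega
      · intro h
        match x, y with
        | Sum.inl j, Sum.inl k =>
          rcases eq_or_ne j k with rfl | hne
          · exact Or.inl rfl
          · have := h j
            have hk := k.isLt
            simp [fkey, hne.symm] at this
            omega
        | Sum.inl j, Sum.inr k =>
          rcases eq_or_ne j k with rfl | hne
          · have := h j
            simp [fkey] at this
          · exact Or.inr ⟨j, k, hne, rfl, rfl⟩
        | Sum.inr j, Sum.inl k =>
          haveI : Nontrivial (Fin n) := Fin.nontrivial_iff_two_le.mpr hn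
          obtain ⟨i, hij⟩ := exists_ne j
          have := h i
          have hk := k.isLt
          simp only [fkey, if_neg hij.symm] at this
          split_ifs at this <;> omega
        | Sum.inr j, Sum.inr k =>
          rcases eq_or_ne j k with rfl | hne
          · exact Or.inl rfl
          · have := h k
            have hj := j.isLt
            simp [fkey, hne] at this
            omega
  · rintro L ⟨hlin, hiff⟩
    have key : ∀ i : Fin n, ∃ k, L k (Sum.inr i) (Sum.inl i) := by
      intro i
      have hnot : ¬ FnLe n (Sum.inl i) (Sum.inr i) := by
        rintro (h | ⟨j, k, hjk, hj, hk⟩)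
        · exact Sum.inl_ne_inr h
        · cases hj; cases hk; exact hjk rfl
      rw [hiff] at hnot
      push_neg at hnot
      obtain ⟨k, hk⟩ := hnot
      refine ⟨k, ?_⟩
      rcases (hlin k).1.2.total (Sum.inr i) (Sum.inl i) with h | h
      · exact h
      · exact absurd h hk
    choose g hg using key
    obtain ⟨i, j, hij, hgij⟩ := Fintype.exists_ne_map_eq_of_card_lt g (by simp; omega)
    set k := g i with hk
    have h1 : L k (Sum.inr i) (Sum.inl i) := hg i
    have h2 : L k (Sum.inr j) (Sum.inl j) := hgij ▸ hg j
    have h3 : L k (Sum.inl i) (Sum.inr j) :=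
      (hiff _ _).mp (Or.inr ⟨i, j, hij, rfl, rfl⟩) k
    have h4 : L k (Sum.inl j) (Sum.inr i) :=
      (hiff _ _).mp (Or.inr ⟨j, i, hij.symm, rfl, rfl⟩) k
    haveI hlo : IsLinearOrder _ (L k) := (hlin k).1
    have e : (Sum.inl i : Fin n ⊕ Fin n) = Sum.inl j :=
      antisymm (Trans.trans h3 h2) (Trans.trans h4 h1)
    exact hij (Sum.inl.inj e)
end

section
/- For every n ≥ 2 and every linear extension ⊴ of the poset F_n, there is at most one index k < n such that b_k ⊴ a_k. -/
/-- For every `n ≥ 2` and every linear extension `r` of `F n`, there is at most one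
index `k` with `b k ⊴ a k`. -/
theorem stmt2 (n : ℕ) (hn : 2 ≤ n) (r : (Fin n ⊕ Fin n) → (Fin n ⊕ Fin n) → Prop)
    (hr : IsLinExt (FnLe n) r) (k k' : Fin n)
    (h : r (Sum.inr k) (Sum.inl k)) (h' : r (Sum.inr k') (Sum.inl k')) :
    k = k' := by
  obtain ⟨hlin, hext⟩ := hr
  by_contra hne
  have h1 : r (Sum.inl k) (Sum.inr k') :=
    hext _ _ (Or.inr ⟨k, k', hne, rfl, rfl⟩)
  have h2 : r (Sum.inl k') (Sum.inr k) :=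
    hext _ _ (Or.inr ⟨k', k, fun e => hne e.symm, rfl, rfl⟩)
  have t := hlin.trans
  have : (Sum.inr k : Fin n ⊕ Fin n) = Sum.inr k' :=
    hlin.antisymm _ _ (t _ _ _ h h1) (t _ _ _ h' h2)
  exact hne (Sum.inr.inj this)
end

section
/- For every n ≥ 2, if ⊴_0, …, ⊴_{n−1} is a family of exactly n linear extensions of F_n that realizes F_n, then for each k < n there exists exactly one index i < n such that b_k ⊴_i a_k. -/
/-- For every `n ≥ 2`, if a family of exactly `n` linear extensions realizes `F n`,
then for each `k < n` there is exactly one index `i < n` with `b k ⊴_i a k`. -/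
theorem stmt3 (n : ℕ) (hn : 2 ≤ n)
    (L : Fin n → (Fin n ⊕ Fin n) → (Fin n ⊕ Fin n) → Prop)
    (hL : RealizedBy (FnLe n) L) (k : Fin n) :
    ∃! i : Fin n, L i (Sum.inr k) (Sum.inl k) := by
  obtain ⟨hlin, hiff⟩ := hL
  -- each pair has at least one reversing index
  have hex : ∀ l : Fin n, ∃ i, L i (Sum.inr l) (Sum.inl l) := by
    intro l
    have hnle : ¬ FnLe n (Sum.inl l) (Sum.inr l) := by
      rintro (h | ⟨i, j, hij, hi, hj⟩)
      · exact Sum.inl_ne_inr h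
      · cases hi; cases hj; exact hij rfl
    have : ¬ ∀ i, L i (Sum.inl l) (Sum.inr l) := fun h => hnle ((hiff _ _).2 h)
    push_neg at this
    obtain ⟨i, hi⟩ := this
    refine ⟨i, ?_⟩
    rcases (hlin i).1.total (Sum.inr l) (Sum.inl l) with h | h
    · exact h
    · exact absurd h hi
  -- each index reverses at most one pair
  have hone : ∀ (i : Fin n) (l m : Fin n),
      L i (Sum.inr l) (Sum.inl l) → L i (Sum.inr m) (Sum.inl m) → l = m := by
    intro i l m hl hm
    by_contra hlm
    have h1 : L i (Sum.inl l) (Sum.inr m) :=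
      (hlin i).2 _ _ (Or.inr ⟨l, m, hlm, rfl, rfl⟩)
    have h2 : L i (Sum.inl m) (Sum.inr l) :=
      (hlin i).2 _ _ (Or.inr ⟨m, l, fun h => hlm h.symm, rfl, rfl⟩)
    have t1 : L i (Sum.inl l) (Sum.inl m) := (hlin i).1.trans _ _ _ h1 hm
    have t2 : L i (Sum.inl m) (Sum.inl l) := (hlin i).1.trans _ _ _ h2 hl
    have := (hlin i).1.antisymm _ _ t1 t2
    exact hlm (Sum.inl.injEq _ _ ▸ this)
  choose f hf using hex
  have hinj : Function.Injective f := fun l m h => hone (f l) l m (hf l) (h ▸ hf m)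
  have hsurj : Function.Surjective f := Finite.surjective_of_injective hinj
  refine ⟨f k, hf k, ?_⟩
  intro i hi
  obtain ⟨l, rfl⟩ := hsurj i
  rw [hone (f l) l k (hf l) hi]
end

section
/- Let (P, ≼) be a countable partially ordered set and let n ≥ 1. If every finite subposet of P (a finite subset of P with the restricted order) is realized by a family of n linear extensions, then (P, ≼) itself is realized by a family of n linear extensions. -/
/-- If every finite subposet of a countable poset `P` is realized by a family of `n`
linear extensions (`n ≥ 1`), then so is `P` itself. -/
theorem stmt4 {P : Type*} [Countable P] [PartialOrder P] (n : ℕ) (hn : 1 ≤ n)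
    (h : ∀ Q : Finset P, ∃ L : Fin n → {x // x ∈ Q} → {x // x ∈ Q} → Prop,
      RealizedBy (fun x y : {x // x ∈ Q} => (x : P) ≤ (y : P)) L) :
    ∃ L : Fin n → P → P → Prop, RealizedBy (fun x y : P => x ≤ y) L := by
  classical
  obtain ⟨U, hU⟩ := Ultrafilter.exists_le (Filter.atTop : Filter (Finset P))
  set LQ : ∀ Q : Finset P, Fin n → {x // x ∈ Q} → {x // x ∈ Q} → Prop :=
    fun Q => (h Q).choose with hLQdef
  have hLQ : ∀ Q, RealizedBy (fun x y : {x // x ∈ Q} => (x : P) ≤ (y : P)) (LQ Q) :=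
    fun Q => (h Q).choose_spec
  set S : Fin n → P → P → Set (Finset P) :=
    fun i x y => {Q | ∃ (hx : x ∈ Q) (hy : y ∈ Q), LQ Q i ⟨x, hx⟩ ⟨y, hy⟩} with hS
  have hmem : ∀ x : P, {Q : Finset P | x ∈ Q} ∈ U := fun x =>
    hU (Filter.eventually_atTop.2 ⟨{x}, fun Q hQ => hQ (Finset.mem_singleton_self x)⟩)
  have hmem2 : ∀ x y : P, {Q : Finset P | x ∈ Q ∧ y ∈ Q} ∈ U := fun x y =>
    Filter.inter_mem (hmem x) (hmem y)
  have hext : ∀ (i : Fin n) (x y : P), x ≤ y → S i x y ∈ U := by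
    intro i x y hxy
    refine Filter.mem_of_superset (hmem2 x y) ?_
    rintro Q ⟨hx, hy⟩
    exact ⟨hx, hy, ((hLQ Q).1 i).2 ⟨x, hx⟩ ⟨y, hy⟩ hxy⟩
  refine ⟨fun i x y => S i x y ∈ U, fun i => ⟨?_, fun x y hle => hext i x y hle⟩, ?_⟩
  · refine { refl := ?_, trans := ?_, antisymm := ?_, total := ?_ }
    · -- refl
      exact fun x => hext i x x le_rfl
    · -- trans
      intro x y z hxy hyz
      refine Filter.mem_of_superset (Filter.inter_mem hxy hyz) ?_
      rintro Q ⟨⟨hx, hy, h1⟩, ⟨hy', hz, h2⟩⟩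
      exact ⟨hx, hz, ((hLQ Q).1 i).1.toIsPartialOrder.toIsPreorder.toIsTrans.trans
        _ _ _ h1 h2⟩
    · -- antisymm
      intro x y hxy hyx
      obtain ⟨Q, ⟨hx, hy, h1⟩, ⟨hy', hx', h2⟩⟩ :=
        Filter.nonempty_of_mem (Filter.inter_mem hxy hyx)
      have := ((hLQ Q).1 i).1.toIsPartialOrder.toAntisymm.antisymm _ _ h1 h2
      exact congrArg Subtype.val this
    · -- total
      intro x y
      have hun : S i x y ∪ S i y x ∈ U := by
        refine Filter.mem_of_superset (hmem2 x y) ?_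
        rintro Q ⟨hx, hy⟩
        rcases ((hLQ Q).1 i).1.toTotal.total (⟨x, hx⟩ : {a // a ∈ Q}) ⟨y, hy⟩ with h1 | h1
        · exact Or.inl ⟨hx, hy, h1⟩
        · exact Or.inr ⟨hy, hx, h1⟩
      exact Ultrafilter.union_mem_iff.1 hun
  · intro x y
    constructor
    · exact fun hle i => hext i x y hle
    · intro hall
      have hA : (⋂ i, S i x y) ∈ U := (Filter.iInter_mem).2 hall
      obtain ⟨Q, hQ1, hx, hy⟩ := Filter.nonempty_of_mem (Filter.inter_mem hA (hmem2 x y))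
      refine ((hLQ Q).2 ⟨x, hx⟩ ⟨y, hy⟩).2 fun i => ?_
      obtain ⟨hx', hy', h1⟩ := Set.mem_iInter.1 hQ1 i
      exact h1
end

section
/- Let (P, ≼) be a partially ordered set and let C⁰, C¹ ⊆ P be incomparable chains. Define relations R⁰ = {(x, y) : x ∥ y, x ∈ C⁰, y ∉ C⁰} and R¹ = {(x, y) : x ∥ y, x ∉ C¹, y ∈ C¹}. Then the relation R = ≼ ∪ R⁰ ∪ R¹ is acyclic: there is no finite sequence x_0, x_1, …, x_{m−1} of elements of P with x_0 R x_1 R … R x_{m−1} R x_0 and not all elements equal (equivalently, the transitive closure of the strict part of R is irreflexive). -/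
open Fin.NatCast Fin.CommRing

/-- Let `C0`, `C1` be incomparable chains in a poset `P`.  The relation `R` consisting of
the order together with the pairs `{(x,y) : x ∥ y, x ∈ C0, y ∉ C0}` and
`{(x,y) : x ∥ y, x ∉ C1, y ∈ C1}` is acyclic: there is no finite `R`-cycle whose
elements are not all equal. -/
theorem stmt5 {P : Type*} [PartialOrder P] (C0 C1 : Set P)
    (hC0 : IsChain (· ≤ ·) C0) (hC1 : IsChain (· ≤ ·) C1)
    (hinc : ∀ y ∈ C0, ∀ z ∈ C1, ¬ y ≤ z ∧ ¬ z ≤ y)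
    (R : P → P → Prop)
    (hR : ∀ x y, R x y ↔
      x ≤ y ∨ ((¬ x ≤ y ∧ ¬ y ≤ x) ∧ x ∈ C0 ∧ y ∉ C0)
        ∨ ((¬ x ≤ y ∧ ¬ y ≤ x) ∧ x ∉ C1 ∧ y ∈ C1)) :
    ∀ (m : ℕ) (s : Fin (m + 1) → P),
      (∀ i, R (s i) (s (i + 1))) → ∀ i j, s i = s j := by
  -- C0 and C1 are disjoint
  have hdisj : ∀ x, x ∈ C0 → x ∈ C1 → False := by
    intro x h0 h1
    exact (hinc x h0 x h1).1 le_rfl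
  -- the "closure" relation
  set Q : P → P → Prop := fun x y => x ≤ y ∨
      (∃ a b, x ≤ a ∧ a ∈ C0 ∧ (¬ a ≤ b ∧ ¬ b ≤ a) ∧ b ∉ C0 ∧ b ≤ y) ∨
      (∃ a b, x ≤ a ∧ a ∉ C1 ∧ (¬ a ≤ b ∧ ¬ b ≤ a) ∧ b ∈ C1 ∧ b ≤ y) with hQ
  have hRQ : ∀ x y, R x y → Q x y := by
    intro x y h
    rcases (hR x y).1 h with h | ⟨hpar, h0, h1⟩ | ⟨hpar, h0, h1⟩
    · exact Or.inl h
    · exact Or.inr (Or.inl ⟨x, y, le_rfl, h0, hpar, h1, le_rfl⟩)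
    · exact Or.inr (Or.inr ⟨x, y, le_rfl, h0, hpar, h1, le_rfl⟩)
  -- comparability in chains
  have hcmp : ∀ (C : Set P), IsChain (· ≤ ·) C → ∀ a ∈ C, ∀ b ∈ C, a ≤ b ∨ b ≤ a := by
    intro C hC a ha b hb
    rcases eq_or_ne a b with rfl | hne
    · exact Or.inl le_rfl
    · exact hC ha hb hne
  -- transitivity of Q
  have htrans : ∀ x y z, Q x y → Q y z → Q x z := by
    intro x y z hxy hyz
    rcases hxy with h | ⟨a, b, hxa, ha0, hab, hb0, hby⟩ | ⟨a, b, hxa, ha1, hab, hb1, hby⟩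
    · rcases hyz with h' | ⟨a, b, hya, ha0, hab, hb0, hbz⟩ | ⟨a, b, hya, ha1, hab, hb1, hbz⟩
      · exact Or.inl (h.trans h')
      · exact Or.inr (Or.inl ⟨a, b, h.trans hya, ha0, hab, hb0, hbz⟩)
      · exact Or.inr (Or.inr ⟨a, b, h.trans hya, ha1, hab, hb1, hbz⟩)
    · rcases hyz with h' | ⟨c, d, hyc, hc0, hcd, hd0, hdz⟩ | ⟨c, d, hyc, hc1, hcd, hd1, hdz⟩
      · exact Or.inr (Or.inl ⟨a, b, hxa, ha0, hab, hb0, hby.trans h'⟩)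
      · -- two R0-type steps: a ≤ c in C0
        have hac : a ≤ c := by
          rcases hcmp C0 hC0 a ha0 c hc0 with h | h
          · exact h
          · exact absurd ((hby.trans hyc).trans h) hab.2
        exact Or.inr (Or.inl ⟨c, d, hxa.trans hac, hc0, hcd, hd0, hdz⟩)
      · -- R0 then R1 step: compose to R0 with endpoints a, d
        have had := hinc a ha0 d hd1
        exact Or.inr (Or.inl ⟨a, d, hxa, ha0, had, fun h => hdisj d h hd1, hdz⟩)
    · rcases hyz with h' | ⟨c, d, hyc, hc0, hcd, hd0, hdz⟩ | ⟨c, d, hyc, hc1, hcd, hd1, hdz⟩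
      · exact Or.inr (Or.inr ⟨a, b, hxa, ha1, hab, hb1, hby.trans h'⟩)
      · -- R1 then R0: impossible since b ∈ C1, c ∈ C0 and b ≤ c
        exact absurd (hby.trans hyc) (hinc c hc0 b hb1).2
      · -- two R1-type steps
        have hbd : b ≤ d := by
          rcases hcmp C1 hC1 b hb1 d hd1 with h | h
          · exact h
          · exact absurd ((h.trans hby).trans hyc) hcd.2
        by_cases had : a ≤ d
        · exact Or.inl ((hxa.trans had).trans hdz)
        · by_cases hda : d ≤ a
          · exact absurd (hbd.trans hda) hab.2
          · exact Or.inr (Or.inr ⟨a, d, hxa, ha1, ⟨had, hda⟩, hd1, hdz⟩)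
  -- antisymmetry of Q
  have hanti : ∀ x y, Q x y → Q y x → x = y := by
    intro x y hxy hyx
    rcases hxy with h | ⟨a, b, hxa, ha0, hab, hb0, hby⟩ | ⟨a, b, hxa, ha1, hab, hb1, hby⟩
    · rcases hyx with h' | ⟨c, d, hyc, hc0, hcd, hd0, hdx⟩ | ⟨c, d, hyc, hc1, hcd, hd1, hdx⟩
      · exact le_antisymm h h'
      · exact absurd ((hdx.trans h).trans hyc) hcd.2
      · exact absurd ((hdx.trans h).trans hyc) hcd.2
    · rcases hyx with h' | ⟨c, d, hyc, hc0, hcd, hd0, hdx⟩ | ⟨c, d, hyc, hc1, hcd, hd1, hdx⟩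
      · exact absurd ((hby.trans h').trans hxa) hab.2
      · rcases hcmp C0 hC0 a ha0 c hc0 with h | h
        · exact absurd ((hdx.trans hxa).trans h) hcd.2
        · exact absurd ((hby.trans hyc).trans h) hab.2
      · exact absurd (hdx.trans hxa) (hinc a ha0 d hd1).2
    · rcases hyx with h' | ⟨c, d, hyc, hc0, hcd, hd0, hdx⟩ | ⟨c, d, hyc, hc1, hcd, hd1, hdx⟩
      · exact absurd ((hby.trans h').trans hxa) hab.2
      · exact absurd (hby.trans hyc) (hinc c hc0 b hb1).2
      · rcases hcmp C1 hC1 b hb1 d hd1 with h | h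
        · exact absurd ((h.trans hdx).trans hxa) hab.2
        · exact absurd ((h.trans hby).trans hyc) hcd.2
  -- now handle the cycle
  intro m s hs
  have key : ∀ (k : ℕ) (i : Fin (m + 1)), Q (s i) (s (i + (k : Fin (m + 1)))) := by
    intro k
    induction k with
    | zero => intro i; simp only [Nat.cast_zero, add_zero]; exact Or.inl le_rfl
    | succ k ih =>
      intro i
      have h1 : Q (s (i + (k : Fin (m + 1)))) (s (i + (k : Fin (m + 1)) + 1)) :=
        hRQ _ _ (hs _)
      have h2 : (i + ((k : ℕ) + 1 : ℕ) : Fin (m + 1)) = i + (k : Fin (m + 1)) + 1 := by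
        push_cast
        ring
      rw [h2]
      exact htrans _ _ _ (ih i) h1
  intro i j
  have hij : Q (s i) (s j) := by
    have := key (j - i).val i
    rwa [Fin.cast_val_eq_self, add_comm i (j - i), sub_add_cancel] at this
  have hji : Q (s j) (s i) := by
    have := key (i - j).val j
    rwa [Fin.cast_val_eq_self, add_comm j (i - j), sub_add_cancel] at this
  exact hanti _ _ hij hji
end

section
/- Let (P, ≼) be a partially ordered set and let C⁰, C¹ ⊆ P be incomparable chains. Then there exists a linear extension ⊴ of ≼ that puts C⁰ at the bottom and C¹ at the top of P, i.e., for every x ∈ P, c₀ ∈ C⁰ and c₁ ∈ C¹, if x ∥ c₀ and x ∥ c₁ then c₀ ⊴ x ⊴ c₁. -/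
/-- If `C0`, `C1` are incomparable chains in a poset `P`, then there is a linear
extension of the order that puts `C0` at the bottom and `C1` at the top of `P`:
for all `x ∈ P`, `c0 ∈ C0`, `c1 ∈ C1`, if `x ∥ c0` and `x ∥ c1` then `c0 ⊴ x ⊴ c1`. -/
theorem stmt6 {P : Type*} [PartialOrder P] (C0 C1 : Set P)
    (hC0 : IsChain (· ≤ ·) C0) (hC1 : IsChain (· ≤ ·) C1)
    (hinc : ∀ y ∈ C0, ∀ z ∈ C1, ¬ y ≤ z ∧ ¬ z ≤ y) :
    ∃ r : P → P → Prop, IsLinExt (fun x y : P => x ≤ y) r ∧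
      ∀ (x : P), ∀ c0 ∈ C0, ∀ c1 ∈ C1,
        (¬ x ≤ c0 ∧ ¬ c0 ≤ x) → (¬ x ≤ c1 ∧ ¬ c1 ≤ x) → r c0 x ∧ r x c1 := by
  classical
  set s : P → P → Prop := fun x y =>
    x ≤ y ∨ (∃ c ∈ C0, x ≤ c ∧ ¬ y ≤ c) ∨ (∃ c ∈ C1, c ≤ y ∧ ¬ c ≤ x) with hs
  haveI hpo : IsPartialOrder P s := by
    refine { refl := ?_, trans := ?_, antisymm := ?_ }
    case refine_3 =>
      intro x y hxy hyx
      rcases hxy with h | ⟨c, hc, hxc, hyc⟩ | ⟨c, hc, hcy, hcx⟩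
      · rcases hyx with h' | ⟨c, hc, hyc, hxc⟩ | ⟨c, hc, hcx, hcy⟩
        · exact le_antisymm h h'
        · exact absurd (h.trans hyc) hxc
        · exact absurd (hcx.trans h) hcy
      · rcases hyx with h' | ⟨c', hc', hyc', hxc'⟩ | ⟨c', hc', hcx', hcy'⟩
        · exact absurd (h'.trans hxc) hyc
        · rcases hC0.total hc hc' with h1 | h1
          · exact absurd (hxc.trans h1) hxc'
          · exact absurd (hyc'.trans h1) hyc
        · exact absurd (hcx'.trans hxc) (hinc c hc c' hc').2
      · rcases hyx with h' | ⟨c', hc', hyc', hxc'⟩ | ⟨c', hc', hcx', hcy'⟩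
        · exact absurd (hcy.trans h') hcx
        · exact absurd (hcy.trans hyc') (hinc c' hc' c hc).2
        · rcases hC1.total hc hc' with h1 | h1
          · exact absurd (h1.trans hcx') hcx
          · exact absurd (h1.trans hcy) hcy'
    case refine_1 => exact fun x => Or.inl le_rfl
    case refine_2 =>
      intro x y z hxy hyz
      rcases hxy with h | ⟨c, hc, hxc, hyc⟩ | ⟨c, hc, hcy, hcx⟩
      · rcases hyz with h' | ⟨c, hc, hyc, hzc⟩ | ⟨c, hc, hcz, hcy⟩
        · exact Or.inl (h.trans h')
        · exact Or.inr (Or.inl ⟨c, hc, h.trans hyc, hzc⟩)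
        · exact Or.inr (Or.inr ⟨c, hc, hcz, fun hcx => hcy (hcx.trans h)⟩)
      · rcases hyz with h' | ⟨c', hc', hyc', hzc'⟩ | ⟨c', hc', hcz', hcy'⟩
        · exact Or.inr (Or.inl ⟨c, hc, hxc, fun hzc => hyc (h'.trans hzc)⟩)
        · rcases hC0.total hc hc' with h1 | h1
          · exact Or.inr (Or.inl ⟨c', hc', hxc.trans h1, hzc'⟩)
          · exact absurd (hyc'.trans h1) hyc
        · refine Or.inr (Or.inr ⟨c', hc', hcz', fun hcx => ?_⟩)
          exact (hinc c hc c' hc').2 (hcx.trans hxc)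
      · rcases hyz with h' | ⟨c', hc', hyc', hzc'⟩ | ⟨c', hc', hcz', hcy'⟩
        · exact Or.inr (Or.inr ⟨c, hc, hcy.trans h', hcx⟩)
        · exact absurd (hcy.trans hyc') (hinc c' hc' c hc).2
        · rcases hC1.total hc hc' with h1 | h1
          · exact Or.inr (Or.inr ⟨c', hc', hcz', fun h2 => hcx (h1.trans h2)⟩)
          · exact absurd (h1.trans hcy) hcy'
  obtain ⟨r, hlin, hrs⟩ := extend_partialOrder s
  refine ⟨r, ⟨hlin, fun x y hxy => hrs _ _ (Or.inl hxy)⟩, ?_⟩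
  intro x c0 hc0 c1 hc1 ⟨h1, h2⟩ ⟨h3, h4⟩
  exact ⟨hrs _ _ (Or.inr (Or.inl ⟨c0, hc0, le_rfl, h1⟩)),
         hrs _ _ (Or.inr (Or.inr ⟨c1, hc1, le_rfl, h4⟩))⟩
end

section
/- (DB_i n) Let (P, ≼) be a partially ordered set, let n ≥ 2, and let C_0, …, C_{n−1} ⊆ P be pairwise incomparable chains; set C = C_0 ∪ … ∪ C_{n−1}. If the subposet P ∖ C is realized by a family of m linear extensions, then (P, ≼) is realized by a family of m + n linear extensions. -/
section Aux

variable {P : Type*} [PartialOrder P]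

private lemma mk_po {r : P → P → Prop} (h1 : ∀ a, r a a)
    (h2 : ∀ a b c, r a b → r b c → r a c) (h3 : ∀ a b, r a b → r b a → a = b) :
    IsPartialOrder P r := by
  haveI : IsRefl P r := ⟨h1⟩
  haveI : IsTrans P r := ⟨h2⟩
  haveI : IsAntisymm P r := ⟨h3⟩
  haveI : IsPreorder P r := IsPreorder.mk
  exact IsPartialOrder.mk

/-- Pushing a chain `W` as high as possible yields a partial order. -/
lemma pushHigh_po (W : Set P) (hW : IsChain (· ≤ ·) W) :
    IsPartialOrder P (fun x y => x ≤ y ∨ ∃ w ∈ W, ¬ w ≤ x ∧ w ≤ y) := by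
  have htot : ∀ w ∈ W, ∀ w' ∈ W, w ≤ w' ∨ w' ≤ w := by
    intro w hw w' hw'
    rcases eq_or_ne w w' with rfl | h
    · exact Or.inl le_rfl
    · exact hW hw hw' h
  refine mk_po (fun a => Or.inl le_rfl) ?_ ?_
  · rintro a b c (hab | ⟨w, hw, hwa, hwb⟩) (hbc | ⟨w', hw', hw'b, hw'c⟩)
    · exact Or.inl (hab.trans hbc)
    · exact Or.inr ⟨w', hw', fun h => hw'b (h.trans hab), hw'c⟩
    · exact Or.inr ⟨w, hw, hwa, hwb.trans hbc⟩
    · rcases htot w hw w' hw' with h | h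
      · exact Or.inr ⟨w', hw', fun hx => hwa (h.trans hx), hw'c⟩
      · exact absurd (h.trans hwb) hw'b
  · rintro a b (hab | ⟨w, hw, hwa, hwb⟩) (hba | ⟨w', hw', hw'b, hw'a⟩)
    · exact le_antisymm hab hba
    · exact absurd (hw'a.trans hab) hw'b
    · exact absurd (hwb.trans hba) hwa
    · rcases htot w hw w' hw' with h | h
      · exact absurd (h.trans hw'a) hwa
      · exact absurd (h.trans hwb) hw'b

/-- Pushing a set `U`, which is a chain for `r`, as low as possible in a partial
order `r` yields a partial order. -/
lemma pushLow_po (r : P → P → Prop) (hr : IsPartialOrder P r) (U : Set P)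
    (hU : ∀ u ∈ U, ∀ u' ∈ U, r u u' ∨ r u' u) :
    IsPartialOrder P (fun x y => r x y ∨ ∃ u ∈ U, r x u ∧ ¬ r y u) := by
  have rtrans : ∀ {a b c}, r a b → r b c → r a c := fun h h' =>
    hr.toIsPreorder.toIsTrans.trans _ _ _ h h'
  have rrefl : ∀ a, r a a := hr.toIsPreorder.toRefl.refl
  refine mk_po (fun a => Or.inl (rrefl a)) ?_ ?_
  · rintro a b c (hab | ⟨u, hu, hau, hbu⟩) (hbc | ⟨u', hu', hbu', hcu'⟩)
    · exact Or.inl (rtrans hab hbc)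
    · exact Or.inr ⟨u', hu', rtrans hab hbu', hcu'⟩
    · exact Or.inr ⟨u, hu, hau, fun h => hbu (rtrans hbc h)⟩
    · rcases hU u hu u' hu' with h | h
      · exact Or.inr ⟨u', hu', rtrans hau h, hcu'⟩
      · exact absurd (rtrans hbu' h) hbu
  · rintro a b (hab | ⟨u, hu, hau, hbu⟩) (hba | ⟨u', hu', hbu', hau'⟩)
    · exact hr.toAntisymm.antisymm _ _ hab hba
    · exact absurd (rtrans hab hbu') hau'
    · exact absurd (rtrans hba hau) hbu
    · rcases hU u hu u' hu' with h | h
      · exact absurd (rtrans hau h) hau'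
      · exact absurd (rtrans hbu' h) hbu

end Aux

/-- `DB_i n`: if `C_0, …, C_{n-1}` (`n ≥ 2`) are pairwise incomparable chains in a poset
`P` and the subposet `P ∖ ⋃ C_i` is realized by `m` linear extensions, then `P` is
realized by `m + n` linear extensions. -/
theorem stmt7 {P : Type*} [PartialOrder P] (n : ℕ) (hn : 2 ≤ n)
    (C : Fin n → Set P) (hchain : ∀ i, IsChain (· ≤ ·) (C i))
    (hinc : ∀ i j, i ≠ j → ∀ y ∈ C i, ∀ z ∈ C j, ¬ y ≤ z ∧ ¬ z ≤ y)
    (m : ℕ)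
    (L : Fin m → {x : P // x ∉ ⋃ i, C i} → {x : P // x ∉ ⋃ i, C i} → Prop)
    (hL : RealizedBy (fun x y : {x : P // x ∉ ⋃ i, C i} => (x : P) ≤ (y : P)) L) :
    ∃ L' : Fin (m + n) → P → P → Prop, RealizedBy (fun x y : P => x ≤ y) L' := by
  haveI : NeZero n := ⟨by omega⟩
  have hsucc_ne : ∀ k : Fin n, k + 1 ≠ k := by
    intro k h
    have hk : (k : ℕ) < n := k.isLt
    have h1 : ((1 : Fin n) : ℕ) = 1 := by
      rw [Fin.val_one' n]
      exact Nat.mod_eq_of_lt (by omega)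
    have h2 : ((k : ℕ) + 1) % n = (k : ℕ) := by
      have h3 := congrArg Fin.val h
      rwa [Fin.val_add, h1] at h3
    rcases Nat.lt_or_ge ((k : ℕ) + 1) n with hlt | hge
    · rw [Nat.mod_eq_of_lt hlt] at h2; omega
    · have hkn : (k : ℕ) + 1 = n := by omega
      rw [hkn, Nat.mod_self] at h2; omega
  -- the extensions coming from the realizer of `D = P \ ⋃ Cᵢ`
  let S : Fin m → P → P → Prop := fun i x y =>
    x ≤ y ∨ ∃ d e : {x : P // x ∉ ⋃ i, C i}, x ≤ (d : P) ∧ L i d e ∧ (e : P) ≤ y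
  have hS_po : ∀ i, IsPartialOrder P (S i) := by
    intro i
    have hlin := (hL.1 i).1
    have hext : ∀ d e : {x : P // x ∉ ⋃ i, C i}, (d : P) ≤ (e : P) → L i d e := (hL.1 i).2
    have ltrans : ∀ {a b c}, L i a b → L i b c → L i a c := fun h h' =>
      hlin.toIsPartialOrder.toIsPreorder.toIsTrans.trans _ _ _ h h'
    have lanti : ∀ {a b}, L i a b → L i b a → a = b := fun h h' =>
      hlin.toIsPartialOrder.toAntisymm.antisymm _ _ h h'
    refine mk_po (fun a => Or.inl le_rfl) ?_ ?_
    · rintro a b c (hab | ⟨d, e, had, hde, heb⟩) (hbc | ⟨d', e', hbd', hd'e', he'c⟩)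
      · exact Or.inl (hab.trans hbc)
      · exact Or.inr ⟨d', e', hab.trans hbd', hd'e', he'c⟩
      · exact Or.inr ⟨d, e, had, hde, heb.trans hbc⟩
      · exact Or.inr ⟨d, e', had, ltrans hde (ltrans (hext _ _ (heb.trans hbd')) hd'e'), he'c⟩
    · rintro a b (hab | ⟨d, e, had, hde, heb⟩) (hba | ⟨d', e', hbd', hd'e', he'a⟩)
      · exact le_antisymm hab hba
      · have h : e' = d' := lanti (hext _ _ ((he'a.trans hab).trans hbd')) hd'e'
        refine le_antisymm hab (hbd'.trans ?_)
        rw [← h]; exact he'a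
      · have h : e = d := lanti (hext _ _ ((heb.trans hba).trans had)) hde
        refine le_antisymm (had.trans ?_) hba
        rw [← h]; exact heb
      · have hed' : L i e d' := hext _ _ (heb.trans hbd')
        have he'd : L i e' d := hext _ _ (he'a.trans had)
        have hde'' : d = e := lanti hde (ltrans hed' (ltrans hd'e' he'd))
        have hd'e'' : d' = e' := lanti hd'e' (ltrans he'd (ltrans hde hed'))
        refine le_antisymm (had.trans ?_) (hbd'.trans ?_)
        · rw [hde'']; exact heb
        · rw [hd'e'']; exact he'a
  have hE := fun i => @extend_partialOrder P (S i) (hS_po i)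
  choose E hE_lin hE_ext' using hE
  have hE_ext : ∀ i x y, S i x y → E i x y := fun i x y h => hE_ext' i x y h
  -- the `n` extensions pushing `C k` low and `C (k+1)` high
  let Q1 : Fin n → P → P → Prop := fun k x y =>
    x ≤ y ∨ ∃ w ∈ C (k + 1), ¬ w ≤ x ∧ w ≤ y
  have hQ1_po : ∀ k, IsPartialOrder P (Q1 k) := fun k =>
    pushHigh_po (C (k + 1)) (hchain (k + 1))
  let Q2 : Fin n → P → P → Prop := fun k x y =>
    Q1 k x y ∨ ∃ u ∈ C k, Q1 k x u ∧ ¬ Q1 k y u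
  have hQ2_po : ∀ k, IsPartialOrder P (Q2 k) := by
    intro k
    refine pushLow_po (Q1 k) (hQ1_po k) (C k) ?_
    intro u hu u' hu'
    rcases eq_or_ne u u' with rfl | h
    · exact Or.inl (Or.inl le_rfl)
    · rcases hchain k hu hu' h with h' | h'
      · exact Or.inl (Or.inl h')
      · exact Or.inr (Or.inl h')
  have hM := fun k => @extend_partialOrder P (Q2 k) (hQ2_po k)
  choose M hM_lin hM_ext' using hM
  have hM_ext : ∀ k x y, Q2 k x y → M k x y := fun k x y h => hM_ext' k x y h
  -- key properties of M k
  have hM_le : ∀ k, ∀ x y : P, x ≤ y → M k x y := fun k x y h =>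
    hM_ext k x y (Or.inl (Or.inl h))
  have hM_low : ∀ k, ∀ u ∈ C k, ∀ z : P, ¬ z ≤ u → M k u z := by
    intro k u hu z hzu
    refine hM_ext k u z (Or.inr ⟨u, hu, Or.inl le_rfl, ?_⟩)
    rintro (h | ⟨w, hw, hwz, hwu⟩)
    · exact hzu h
    · exact (hinc (k + 1) k (hsucc_ne k) w hw u hu).1 hwu
  have hM_high : ∀ k, ∀ w ∈ C (k + 1), ∀ z : P, ¬ w ≤ z → M k z w := by
    intro k w hw z hwz
    exact hM_ext k z w (Or.inl (Or.inr ⟨w, hw, hwz, le_rfl⟩))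
  have hE_le : ∀ i, ∀ x y : P, x ≤ y → E i x y := fun i x y h =>
    hE_ext i x y (Or.inl h)
  -- assemble
  refine ⟨Fin.addCases E M, ?_, ?_⟩
  · intro i
    refine Fin.addCases (motive := fun i => IsLinExt (fun x y : P => x ≤ y)
      (Fin.addCases (motive := fun _ => P → P → Prop) E M i)) ?_ ?_ i
    · intro i
      simp only [Fin.addCases_left]
      exact ⟨hE_lin i, hE_le i⟩
    · intro k
      simp only [Fin.addCases_right]
      exact ⟨hM_lin k, hM_le k⟩
  · intro x y
    constructor
    · intro hxy i
      refine Fin.addCases (motive := fun i =>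
        Fin.addCases (motive := fun _ => P → P → Prop) E M i x y) ?_ ?_ i
      · intro i
        simp only [Fin.addCases_left]
        exact hE_le i x y hxy
      · intro k
        simp only [Fin.addCases_right]
        exact hM_le k x y hxy
    · intro hall
      by_contra hxy
      have hne : x ≠ y := fun h => hxy (h ▸ le_refl x)
      by_cases hy : y ∈ ⋃ i, C i
      · obtain ⟨k, hyk⟩ := Set.mem_iUnion.1 hy
        have hMyx : M k y x := hM_low k y hyk x hxy
        have hMxy := hall (Fin.natAdd m k)
        simp only [Fin.addCases_right] at hMxy
        exact hne ((hM_lin k).toIsPartialOrder.toAntisymm.antisymm _ _ hMxy hMyx)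
      · by_cases hx : x ∈ ⋃ i, C i
        · obtain ⟨k, hxk⟩ := Set.mem_iUnion.1 hx
          have hxk' : x ∈ C ((k - 1) + 1) := by rwa [sub_add_cancel]
          have hMyx : M (k - 1) y x := hM_high (k - 1) x hxk' y hxy
          have hMxy := hall (Fin.natAdd m (k - 1))
          simp only [Fin.addCases_right] at hMxy
          exact hne ((hM_lin (k - 1)).toIsPartialOrder.toAntisymm.antisymm _ _ hMxy hMyx)
        · -- both in D
          have hnotL : ¬ ∀ i, L i ⟨x, hx⟩ ⟨y, hy⟩ := by
            intro h
            exact hxy ((hL.2 ⟨x, hx⟩ ⟨y, hy⟩).2 h)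
          push_neg at hnotL
          obtain ⟨i, hi⟩ := hnotL
          have hlin := (hL.1 i).1
          have htot : L i ⟨y, hy⟩ ⟨x, hx⟩ := by
            rcases hlin.toTotal.total ⟨x, hx⟩ ⟨y, hy⟩ with h | h
            · exact absurd h hi
            · exact h
          have hEyx : E i y x :=
            hE_ext i y x (Or.inr ⟨⟨y, hy⟩, ⟨x, hx⟩, le_rfl, htot, le_rfl⟩)
          have hExy := hall (Fin.castAdd n i)
          simp only [Fin.addCases_left] at hExy
          exact hne ((hE_lin i).toIsPartialOrder.toAntisymm.antisymm _ _ hExy hEyx)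
end

section
/- (DB_i 1) Let (P, ≼) be a partially ordered set and let C ⊆ P be a chain. If the subposet P ∖ C is realized by a family of m linear extensions, then (P, ≼) is realized by a family of m + 2 linear extensions. -/
section Aux

variable {P : Type*} [PartialOrder P] {C : Set P}

/-- Extend a linear extension of the subposet `P ∖ C` to all of `P`. -/
theorem aux_lift (i : Unit) (Li : {x : P // x ∉ C} → {x : P // x ∉ C} → Prop)
    (hlin : IsLinearOrder _ Li)
    (hext : ∀ a b : {x : P // x ∉ C}, (a : P) ≤ b → Li a b) :
    ∃ r : P → P → Prop, IsLinearOrder P r ∧ (∀ x y : P, x ≤ y → r x y) ∧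
      (∀ a b : {x : P // x ∉ C}, Li a b → r (a : P) (b : P)) := by
  haveI := hlin
  have htrans : ∀ a b c, Li a b → Li b c → Li a c := fun a b c => Trans.trans
  have hanti : ∀ a b, Li a b → Li b a → a = b := fun a b => Std.Antisymm.antisymm a b
  set s : P → P → Prop := fun x y => x ≤ y ∨
    ∃ a b : {x : P // x ∉ C}, x ≤ a ∧ Li a b ∧ (b : P) ≤ y with hs
  haveI : IsPartialOrder P s := by
    refine { refl := fun x => Or.inl le_rfl, trans := ?_, antisymm := ?_ }
    · rintro x y z (h1 | ⟨a, b, hxa, hab, hby⟩) (h2 | ⟨a', b', hya', ha'b', hb'z⟩)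
      · exact Or.inl (h1.trans h2)
      · exact Or.inr ⟨a', b', h1.trans hya', ha'b', hb'z⟩
      · exact Or.inr ⟨a, b, hxa, hab, hby.trans h2⟩
      · have hba' : Li b a' := hext b a' (hby.trans hya')
        exact Or.inr ⟨a, b', hxa, htrans _ _ _ hab (htrans _ _ _ hba' ha'b'), hb'z⟩
    · rintro x y (h1 | ⟨a, b, hxa, hab, hby⟩) (h2 | ⟨a', b', hya', ha'b', hb'x⟩)
      · exact le_antisymm h1 h2
      · -- x ≤ y, and y ≤ a', Li a' b', b' ≤ x
        have : Li b' a' := hext b' a' ((hb'x.trans h1).trans hya')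
        have hab' : a' = b' := hanti _ _ ha'b' this
        exact le_antisymm h1 ((hya'.trans (hab' ▸ le_rfl)).trans hb'x)
      · have : Li b a := hext b a ((hby.trans h2).trans hxa)
        have hab' : a = b := hanti _ _ hab this
        exact le_antisymm ((hxa.trans (hab' ▸ le_rfl)).trans hby) h2
      · have hba' : Li b a' := hext b a' (hby.trans hya')
        have hb'a : Li b' a := hext b' a (hb'x.trans hxa)
        have haa' : a = a' := hanti _ _ (htrans _ _ _ hab hba') (htrans _ _ _ ha'b' hb'a)
        have hab2 : a = b := hanti _ _ hab (haa' ▸ hba' : Li b a)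
        have ha'b'2 : a' = b' := hanti _ _ ha'b' (haa' ▸ hb'a : Li b' a')
        have h1 : x ≤ y := (hxa.trans (hab2 ▸ le_rfl)).trans hby
        have h2 : y ≤ x := (hya'.trans (ha'b'2 ▸ le_rfl)).trans hb'x
        exact le_antisymm h1 h2
  obtain ⟨r, hr, hrs⟩ := extend_partialOrder s
  exact ⟨r, hr, fun x y h => hrs _ _ (Or.inl h),
    fun a b h => hrs _ _ (Or.inr ⟨a, b, le_rfl, h, le_rfl⟩)⟩

/-- A linear extension of `P` putting the chain `C` as low as possible. -/
theorem aux_low (hC : IsChain (· ≤ ·) C) :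
    ∃ r : P → P → Prop, IsLinearOrder P r ∧ (∀ x y : P, x ≤ y → r x y) ∧
      (∀ x y : P, x ∈ C → y ∉ C → ¬ y ≤ x → r x y) := by
  set s : P → P → Prop := fun x y => x ≤ y ∨
    ∃ c d : P, c ∈ C ∧ d ∉ C ∧ x ≤ c ∧ ¬ d ≤ c ∧ d ≤ y with hs
  have key : ∀ c c' d d' : P, c ∈ C → c' ∈ C → d ∉ C → d' ∉ C →
      ¬ d ≤ c → d ≤ c' → ¬ d' ≤ c' → ¬ d' ≤ c := by
    intro c c' d d' hc hc' hd hd' hdc hdc' hd'c' hd'c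
    rcases eq_or_ne c c' with rfl | hne
    · exact hd'c' hd'c
    rcases hC hc hc' hne with h | h
    · exact hd'c' (hd'c.trans h)
    · exact hdc (hdc'.trans h)
  haveI : IsPartialOrder P s := by
    refine { refl := fun x => Or.inl le_rfl, trans := ?_, antisymm := ?_ }
    · rintro x y z (h1 | ⟨c, d, hc, hd, hxc, hdc, hdy⟩) (h2 | ⟨c', d', hc', hd', hyc', hd'c', hd'z⟩)
      · exact Or.inl (h1.trans h2)
      · exact Or.inr ⟨c', d', hc', hd', h1.trans hyc', hd'c', hd'z⟩
      · exact Or.inr ⟨c, d, hc, hd, hxc, hdc, hdy.trans h2⟩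
      · exact Or.inr ⟨c, d', hc, hd', hxc,
          key c c' d d' hc hc' hd hd' hdc (hdy.trans hyc') hd'c', hd'z⟩
    · rintro x y (h1 | ⟨c, d, hc, hd, hxc, hdc, hdy⟩) (h2 | ⟨c', d', hc', hd', hyc', hd'c', hd'x⟩)
      · exact le_antisymm h1 h2
      · exact absurd ((hd'x.trans h1).trans hyc') hd'c'
      · exact absurd ((hdy.trans h2).trans hxc) hdc
      · exact absurd (hd'x.trans hxc)
          (key c c' d d' hc hc' hd hd' hdc (hdy.trans hyc') hd'c')
  obtain ⟨r, hr, hrs⟩ := extend_partialOrder s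
  exact ⟨r, hr, fun x y h => hrs _ _ (Or.inl h),
    fun x y hx hy h => hrs _ _ (Or.inr ⟨x, y, hx, hy, le_rfl, h, le_rfl⟩)⟩

/-- A linear extension of `P` putting the chain `C` as high as possible. -/
theorem aux_high (hC : IsChain (· ≤ ·) C) :
    ∃ r : P → P → Prop, IsLinearOrder P r ∧ (∀ x y : P, x ≤ y → r x y) ∧
      (∀ x y : P, x ∉ C → y ∈ C → ¬ y ≤ x → r x y) := by
  set s : P → P → Prop := fun x y => x ≤ y ∨
    ∃ d c : P, d ∉ C ∧ c ∈ C ∧ x ≤ d ∧ ¬ c ≤ d ∧ c ≤ y with hs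
  have key : ∀ d d' c c' : P, d ∉ C → d' ∉ C → c ∈ C → c' ∈ C →
      ¬ c ≤ d → c ≤ d' → ¬ c' ≤ d' → ¬ c' ≤ d := by
    intro d d' c c' hd hd' hc hc' hcd hcd' hc'd' hc'd
    rcases eq_or_ne c c' with rfl | hne
    · exact hcd hc'd
    rcases hC hc hc' hne with h | h
    · exact hcd (h.trans hc'd)
    · exact hc'd' (h.trans hcd')
  haveI : IsPartialOrder P s := by
    refine { refl := fun x => Or.inl le_rfl, trans := ?_, antisymm := ?_ }
    · rintro x y z (h1 | ⟨d, c, hd, hc, hxd, hcd, hcy⟩) (h2 | ⟨d', c', hd', hc', hyd', hc'd', hc'z⟩)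
      · exact Or.inl (h1.trans h2)
      · exact Or.inr ⟨d', c', hd', hc', h1.trans hyd', hc'd', hc'z⟩
      · exact Or.inr ⟨d, c, hd, hc, hxd, hcd, hcy.trans h2⟩
      · exact Or.inr ⟨d, c', hd, hc', hxd,
          key d d' c c' hd hd' hc hc' hcd (hcy.trans hyd') hc'd', hc'z⟩
    · rintro x y (h1 | ⟨d, c, hd, hc, hxd, hcd, hcy⟩) (h2 | ⟨d', c', hd', hc', hyd', hc'd', hc'x⟩)
      · exact le_antisymm h1 h2
      · exact absurd ((hc'x.trans h1).trans hyd') hc'd'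
      · exact absurd ((hcy.trans h2).trans hxd) hcd
      · exact absurd (hc'x.trans hxd)
          (key d d' c c' hd hd' hc hc' hcd (hcy.trans hyd') hc'd')
  obtain ⟨r, hr, hrs⟩ := extend_partialOrder s
  exact ⟨r, hr, fun x y h => hrs _ _ (Or.inl h),
    fun x y hx hy h => hrs _ _ (Or.inr ⟨x, y, hx, hy, le_rfl, h, le_rfl⟩)⟩

end Aux

/-- `DB_i 1`: if `C` is a chain in a poset `P` and the subposet `P ∖ C` is realized by
`m` linear extensions, then `P` is realized by `m + 2` linear extensions. -/
theorem stmt8 {P : Type*} [PartialOrder P] (C : Set P) (hC : IsChain (· ≤ ·) C)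
    (m : ℕ)
    (L : Fin m → {x : P // x ∉ C} → {x : P // x ∉ C} → Prop)
    (hL : RealizedBy (fun x y : {x : P // x ∉ C} => (x : P) ≤ (y : P)) L) :
    ∃ L' : Fin (m + 2) → P → P → Prop, RealizedBy (fun x y : P => x ≤ y) L' := by
  classical
  obtain ⟨hLlin, hLiff⟩ := hL
  choose R hR1 hR2 hR3 using fun i : Fin m =>
    aux_lift (C := C) () (L i) (hLlin i).1 (hLlin i).2
  obtain ⟨A, hA1, hA2, hA3⟩ := aux_low hC
  obtain ⟨B, hB1, hB2, hB3⟩ := aux_high hC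
  refine ⟨fun j => if h : (j : ℕ) < m then R ⟨j, h⟩ else if (j : ℕ) = m then A else B, ?_, ?_⟩
  · intro j
    by_cases h1 : (j : ℕ) < m
    · simpa only [IsLinExt, dif_pos h1] using (⟨hR1 _, hR2 _⟩ : IsLinExt _ _)
    · by_cases h2 : (j : ℕ) = m
      · simpa only [IsLinExt, dif_neg h1, if_pos h2] using (⟨hA1, hA2⟩ : IsLinExt _ _)
      · simpa only [IsLinExt, dif_neg h1, if_neg h2] using (⟨hB1, hB2⟩ : IsLinExt _ _)
  · intro x y
    constructor
    · intro hxy j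
      by_cases h1 : (j : ℕ) < m
      · simpa only [dif_pos h1] using hR2 _ _ _ hxy
      · by_cases h2 : (j : ℕ) = m
        · simpa only [dif_neg h1, if_pos h2] using hA2 _ _ hxy
        · simpa only [dif_neg h1, if_neg h2] using hB2 _ _ hxy
    · intro h
      by_contra hxy
      have hne : x ≠ y := fun e => hxy (e ▸ le_rfl)
      by_cases hx : x ∈ C <;> by_cases hy : y ∈ C
      · -- both in C: chain gives y ≤ x, use any extension
        rcases hC hx hy hne with h1 | h1
        · exact hxy h1
        · have hAxy : A x y := by
            have := h ⟨m, by omega⟩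
            simpa only [dif_neg (lt_irrefl m), if_pos rfl, if_true] using this
          haveI := hA1
          exact hne (Std.Antisymm.antisymm x y hAxy (hA2 _ _ h1))
      · -- x ∈ C, y ∉ C : use B
        have hBxy : B x y := by
          have := h ⟨m + 1, by omega⟩
          simpa only [dif_neg (by omega : ¬ m + 1 < m), if_neg (by omega : ¬ m + 1 = m)]
            using this
        have hByx : B y x := hB3 y x hy hx hxy
        haveI := hB1
        exact hne (Std.Antisymm.antisymm x y hBxy hByx)
      · -- x ∉ C, y ∈ C : use A
        have hAxy : A x y := by
          have := h ⟨m, by omega⟩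
          simpa only [dif_neg (lt_irrefl m), if_pos rfl, if_true] using this
        have hAyx : A y x := hA3 y x hy hx hxy
        haveI := hA1
        exact hne (Std.Antisymm.antisymm x y hAxy hAyx)
      · -- both outside C : use the lifted realizer
        have : ¬ ∀ i, L i ⟨x, hx⟩ ⟨y, hy⟩ := by
          intro hall
          exact hxy ((hLiff ⟨x, hx⟩ ⟨y, hy⟩).mpr hall)
        push_neg at this
        obtain ⟨i, hi⟩ := this
        haveI := (hLlin i).1
        have htot : L i ⟨y, hy⟩ ⟨x, hx⟩ := by
          rcases Std.Total.total (r := L i) ⟨x, hx⟩ ⟨y, hy⟩ with h1 | h1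
          · exact absurd h1 hi
          · exact h1
        have hRyx : R i y x := hR3 i ⟨y, hy⟩ ⟨x, hx⟩ htot
        have hRxy : R i x y := by
          have := h ⟨i, by omega⟩
          simpa only [dif_pos (show ((⟨(i : ℕ), by omega⟩ : Fin (m + 2)) : ℕ) < m from i.2),
            Fin.eta] using this
        haveI := hR1 i
        exact hne (Std.Antisymm.antisymm x y hRxy hRyx)
end

section
/- (DB_c n) Let (P, ≼) be a partially ordered set, let n ≥ 1, and let C_0, …, C_{n−1} ⊆ P be chains (not necessarily incomparable); set C = C_0 ∪ … ∪ C_{n−1}. If the subposet P ∖ C is realized by a family of m linear extensions, then (P, ≼) is realized by a family of m + 2n linear extensions. -/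
section Aux

variable {P : Type*} [PartialOrder P]

lemma linext_of_po (r : P → P → Prop) (hpo : IsPartialOrder P r)
    (hler : ∀ x y : P, x ≤ y → r x y) :
    ∃ s, IsLinExt (fun x y : P => x ≤ y) s ∧ ∀ x y, r x y → s x y := by
  obtain ⟨s, hs, hrs⟩ := @extend_partialOrder P r hpo
  exact ⟨s, ⟨hs, fun x y h => hrs x y (hler x y h)⟩, fun x y h => hrs x y h⟩

lemma chainLow {C : Set P} (hC : IsChain (· ≤ ·) C) :
    ∃ s, IsLinExt (fun x y : P => x ≤ y) s ∧ ∀ c x, c ∈ C → ¬ x ≤ c → s c x := by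
  set r : P → P → Prop := fun x y => x ≤ y ∨ ∃ c ∈ C, x ≤ c ∧ ¬ y ≤ c with hr
  have hpo : IsPartialOrder P r :=
    { refl := fun x => Or.inl le_rfl
      trans := by
        rintro x y z (hxy | ⟨c, hc, hxc, hyc⟩) (hyz | ⟨c', hc', hyc', hzc'⟩)
        · exact Or.inl (hxy.trans hyz)
        · exact Or.inr ⟨c', hc', hxy.trans hyc', hzc'⟩
        · exact Or.inr ⟨c, hc, hxc, fun h => hyc (hyz.trans h)⟩
        · rcases hC.total hc hc' with h | h
          · exact Or.inr ⟨c', hc', hxc.trans h, hzc'⟩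
          · exact absurd (hyc'.trans h) hyc
      antisymm := by
        rintro x y (hxy | ⟨c, hc, hxc, hyc⟩) (hyx | ⟨c', hc', hyc', hxc'⟩)
        · exact le_antisymm hxy hyx
        · exact absurd (hxy.trans hyc') hxc'
        · exact absurd (hyx.trans hxc) hyc
        · rcases hC.total hc hc' with h | h
          · exact absurd (hxc.trans h) hxc'
          · exact absurd (hyc'.trans h) hyc }
  obtain ⟨s, hs, hrs⟩ := linext_of_po r hpo (fun x y h => Or.inl h)
  exact ⟨s, hs, fun c x hc hxc => hrs _ _ (Or.inr ⟨c, hc, le_rfl, hxc⟩)⟩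

lemma chainHigh {C : Set P} (hC : IsChain (· ≤ ·) C) :
    ∃ s, IsLinExt (fun x y : P => x ≤ y) s ∧ ∀ c x, c ∈ C → ¬ c ≤ x → s x c := by
  set r : P → P → Prop := fun x y => x ≤ y ∨ ∃ c ∈ C, c ≤ y ∧ ¬ c ≤ x with hr
  have hpo : IsPartialOrder P r :=
    { refl := fun x => Or.inl le_rfl
      trans := by
        rintro x y z (hxy | ⟨c, hc, hcy, hcx⟩) (hyz | ⟨c', hc', hcz', hcy'⟩)
        · exact Or.inl (hxy.trans hyz)
        · exact Or.inr ⟨c', hc', hcz', fun h => hcy' (h.trans hxy)⟩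
        · exact Or.inr ⟨c, hc, hcy.trans hyz, hcx⟩
        · rcases hC.total hc hc' with h | h
          · exact Or.inr ⟨c, hc, h.trans hcz', hcx⟩
          · exact absurd (h.trans hcy) hcy'
      antisymm := by
        rintro x y (hxy | ⟨c, hc, hcy, hcx⟩) (hyx | ⟨c', hc', hcx', hcy'⟩)
        · exact le_antisymm hxy hyx
        · exact absurd (hcx'.trans hxy) hcy'
        · exact absurd (hcy.trans hyx) hcx
        · rcases hC.total hc hc' with h | h
          · exact absurd (h.trans hcx') hcx
          · exact absurd (h.trans hcy) hcy' }
  obtain ⟨s, hs, hrs⟩ := linext_of_po r hpo (fun x y h => Or.inl h)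
  exact ⟨s, hs, fun c x hc hcx => hrs _ _ (Or.inr ⟨c, hc, le_rfl, hcx⟩)⟩

lemma midExt {p : P → Prop} (t : Subtype p → Subtype p → Prop)
    (ht : IsLinearOrder (Subtype p) t)
    (hext : ∀ a b : Subtype p, (a : P) ≤ (b : P) → t a b) :
    ∃ s, IsLinExt (fun x y : P => x ≤ y) s ∧ ∀ a b : Subtype p, t a b → s a b := by
  haveI := ht
  have tA : ∀ a b : Subtype p, t a b → t b a → a = b := fun a b h1 h2 =>
    Std.Antisymm.antisymm a b h1 h2
  have tT : ∀ a b c : Subtype p, t a b → t b c → t a c := fun a b c h1 h2 =>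
    IsTrans.trans a b c h1 h2
  set r : P → P → Prop :=
    fun x y => x ≤ y ∨ ∃ a b : Subtype p, x ≤ a ∧ t a b ∧ (b : P) ≤ y with hr
  have hpo : IsPartialOrder P r :=
    { refl := fun x => Or.inl le_rfl
      trans := by
        rintro x y z (hxy | ⟨a, b, hxa, hab, hby⟩) (hyz | ⟨a', b', hya', hab', hbz'⟩)
        · exact Or.inl (hxy.trans hyz)
        · exact Or.inr ⟨a', b', hxy.trans hya', hab', hbz'⟩
        · exact Or.inr ⟨a, b, hxa, hab, hby.trans hyz⟩
        · have hba' : t b a' := hext b a' (hby.trans hya')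
          exact Or.inr ⟨a, b', hxa, tT _ _ _ (tT _ _ _ hab hba') hab', hbz'⟩
      antisymm := by
        rintro x y (hxy | ⟨a, b, hxa, hab, hby⟩) (hyx | ⟨a', b', hya', hab', hbx'⟩)
        · exact le_antisymm hxy hyx
        · have hba : t b' a' := hext b' a' (hbx'.trans (hxy.trans hya'))
          have : a' = b' := tA _ _ hab' hba
          subst this
          exact le_antisymm hxy (hya'.trans hbx')
        · have hba : t b a := hext b a (hby.trans (hyx.trans hxa))
          have : a = b := tA _ _ hab hba
          subst this
          exact le_antisymm (hxa.trans hby) hyx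
        · have hba' : t b a' := hext b a' (hby.trans hya')
          have hb'a : t b' a := hext b' a (hbx'.trans hxa)
          have haa' : a = a' := tA _ _ (tT _ _ _ hab hba') (tT _ _ _ hab' hb'a)
          have hab2 : a = b := tA _ _ hab (haa' ▸ hba')
          have hab2' : a' = b' := tA _ _ hab' (haa'.symm ▸ hb'a)
          exact le_antisymm (hxa.trans (by rw [hab2]; exact hby))
            (hya'.trans (by rw [hab2']; exact hbx')) }
  obtain ⟨s, hs, hrs⟩ := linext_of_po r hpo (fun x y h => Or.inl h)
  exact ⟨s, hs, fun a b h => hrs _ _ (Or.inr ⟨a, b, le_rfl, h, le_rfl⟩)⟩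

end Aux

/-- `DB_c n`: if `C_0, …, C_{n-1}` (`n ≥ 1`) are chains (not necessarily incomparable)
in a poset `P` and the subposet `P ∖ ⋃ C_i` is realized by `m` linear extensions, then
`P` is realized by `m + 2n` linear extensions. -/
theorem stmt9 {P : Type*} [PartialOrder P] (n : ℕ) (hn : 1 ≤ n)
    (C : Fin n → Set P) (hchain : ∀ i, IsChain (· ≤ ·) (C i))
    (m : ℕ)
    (L : Fin m → {x : P // x ∉ ⋃ i, C i} → {x : P // x ∉ ⋃ i, C i} → Prop)
    (hL : RealizedBy (fun x y : {x : P // x ∉ ⋃ i, C i} => (x : P) ≤ (y : P)) L) :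
    ∃ L' : Fin (m + 2 * n) → P → P → Prop, RealizedBy (fun x y : P => x ≤ y) L' := by
  -- the three families of extensions
  have hmid : ∀ i : Fin m, ∃ s, IsLinExt (fun x y : P => x ≤ y) s ∧
      ∀ a b : {x : P // x ∉ ⋃ i, C i}, L i a b → s a b := fun i =>
    midExt (L i) (hL.1 i).1 (fun a b h => (hL.1 i).2 a b h)
  choose smid hsmid hmidP using hmid
  choose slow hslow hlowP using fun j : Fin n => chainLow (hchain j)
  choose shigh hshigh hhighP using fun j : Fin n => chainHigh (hchain j)
  classical
  refine ⟨fun i => if h : (i : ℕ) < m then smid ⟨i, h⟩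
    else if (i : ℕ) % 2 = m % 2 then slow ⟨((i : ℕ) - m) / 2, by omega⟩
    else shigh ⟨((i : ℕ) - m) / 2, by omega⟩, ?_, ?_⟩
  · intro i
    dsimp only
    split_ifs with h1 h2
    · exact hsmid _
    · exact hslow _
    · exact hshigh _
  · intro x y
    constructor
    · intro hxy i
      split_ifs with h1 h2
      · exact (hsmid _).2 x y hxy
      · exact (hslow _).2 x y hxy
      · exact (hshigh _).2 x y hxy
    · intro h
      by_contra hxy
      -- find an index where y comes before x, then use antisymmetry
      have key : ∃ i : Fin (m + 2 * n),
          (if h : (i : ℕ) < m then smid ⟨i, h⟩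
            else if (i : ℕ) % 2 = m % 2 then slow ⟨((i : ℕ) - m) / 2, by omega⟩
            else shigh ⟨((i : ℕ) - m) / 2, by omega⟩) y x := by
        by_cases hy : y ∈ ⋃ i, C i
        · obtain ⟨j, hj⟩ : ∃ j, y ∈ C j := by simpa using hy
          refine ⟨⟨m + 2 * (j : ℕ), by omega⟩, ?_⟩
          rw [dif_neg (by simp), if_pos (by simp only [Fin.val_mk]; omega)]
          show slow ⟨(m + 2 * (j : ℕ) - m) / 2, by omega⟩ y x
          have e : (⟨(m + 2 * (j : ℕ) - m) / 2, by omega⟩ : Fin n) = j :=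
            Fin.ext (by simp only [Fin.val_mk]; omega)
          rw [e]
          exact hlowP j y x hj hxy
        · by_cases hx : x ∈ ⋃ i, C i
          · obtain ⟨j, hj⟩ : ∃ j, x ∈ C j := by simpa using hx
            refine ⟨⟨m + 2 * (j : ℕ) + 1, by omega⟩, ?_⟩
            rw [dif_neg (by simp only [Fin.val_mk]; omega), if_neg (by simp only [Fin.val_mk]; omega)]
            show shigh ⟨(m + 2 * (j : ℕ) + 1 - m) / 2, by omega⟩ y x
            have e : (⟨(m + 2 * (j : ℕ) + 1 - m) / 2, by omega⟩ : Fin n) = j :=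
              Fin.ext (by simp only [Fin.val_mk]; omega)
            rw [e]
            exact hhighP j x y hj hxy
          · have : ¬ ∀ i, L i ⟨x, hx⟩ ⟨y, hy⟩ := fun hh => hxy ((hL.2 _ _).2 hh)
            push_neg at this
            obtain ⟨i, hi⟩ := this
            haveI := (hL.1 i).1
            have : L i ⟨y, hy⟩ ⟨x, hx⟩ := (Std.Total.total _ _).resolve_left hi
            refine ⟨⟨(i : ℕ), by omega⟩, ?_⟩
            rw [dif_pos (show ((⟨(i : ℕ), by omega⟩ : Fin (m + 2 * n)) : ℕ) < m from i.2)]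
            show smid ⟨(i : ℕ), i.2⟩ y x
            have e : (⟨(i : ℕ), i.2⟩ : Fin m) = i := Fin.ext rfl
            rw [e]
            exact hmidP i _ _ ‹L i ⟨y, hy⟩ ⟨x, hx⟩›
      obtain ⟨i, hi⟩ := key
      have hxy' := h i
      dsimp only at hxy' hi
      have hxe : x = y := by
        split_ifs at hxy' hi with h1 h2
        · haveI := (hsmid ⟨↑i, h1⟩).1; exact Std.Antisymm.antisymm x y hxy' hi
        · haveI := (hslow ⟨(↑i - m) / 2, by omega⟩).1
          exact Std.Antisymm.antisymm x y hxy' hi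
        · haveI := (hshigh ⟨(↑i - m) / 2, by omega⟩).1
          exact Std.Antisymm.antisymm x y hxy' hi
      exact hxy (hxe ▸ le_rfl)
end

section
/- (DB⁺_p) Let (P, ≼) be a partially ordered set, let x₀ ∈ P, and let n ≥ 1. If L_0, …, L_{n−1} is a family of linear extensions realizing the subposet P ∖ {x₀}, then there exist linear extensions L'_0, …, L'_n of ≼ realizing (P, ≼) such that for every j < n − 1 the restriction of L'_j to P ∖ {x₀} equals L_j. -/
section AuxDBp

variable {P : Type*} [PartialOrder P] {x0 : P}

/-- Insert `x0` into a linear order `r` on `P ∖ {x0}` just above the cut `S`. -/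
private def extIns (x0 : P) (r : {x : P // x ≠ x0} → {x : P // x ≠ x0} → Prop)
    (S : Set {x : P // x ≠ x0}) : P → P → Prop := fun x y =>
  (x = x0 ∧ y = x0) ∨
  (x = x0 ∧ ∃ hy : y ≠ x0, (⟨y, hy⟩ : {x : P // x ≠ x0}) ∉ S) ∨
  (y = x0 ∧ ∃ hx : x ≠ x0, (⟨x, hx⟩ : {x : P // x ≠ x0}) ∈ S) ∨
  (∃ (hx : x ≠ x0) (hy : y ≠ x0), r ⟨x, hx⟩ ⟨y, hy⟩)

private lemma extIns_x0_x0 (r : {x : P // x ≠ x0} → {x : P // x ≠ x0} → Prop)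
    (S : Set {x : P // x ≠ x0}) : extIns x0 r S x0 x0 := Or.inl ⟨rfl, rfl⟩

private lemma extIns_x0_left {r : {x : P // x ≠ x0} → {x : P // x ≠ x0} → Prop}
    {S : Set {x : P // x ≠ x0}} {y : P} (hy : y ≠ x0) :
    extIns x0 r S x0 y ↔ (⟨y, hy⟩ : {x : P // x ≠ x0}) ∉ S := by
  constructor
  · rintro (⟨-, h⟩ | ⟨-, hy', h⟩ | ⟨h, -⟩ | ⟨hx, -, -⟩)
    · exact absurd h hy
    · exact h
    · exact absurd h hy
    · exact absurd rfl hx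
  · intro h; exact Or.inr (Or.inl ⟨rfl, hy, h⟩)

private lemma extIns_x0_right {r : {x : P // x ≠ x0} → {x : P // x ≠ x0} → Prop}
    {S : Set {x : P // x ≠ x0}} {x : P} (hx : x ≠ x0) :
    extIns x0 r S x x0 ↔ (⟨x, hx⟩ : {x : P // x ≠ x0}) ∈ S := by
  constructor
  · rintro (⟨h, -⟩ | ⟨h, -⟩ | ⟨-, hx', h⟩ | ⟨-, hy, -⟩)
    · exact absurd h hx
    · exact absurd h hx
    · exact h
    · exact absurd rfl hy
  · intro h; exact Or.inr (Or.inr (Or.inl ⟨rfl, hx, h⟩))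

private lemma extIns_ne {r : {x : P // x ≠ x0} → {x : P // x ≠ x0} → Prop}
    {S : Set {x : P // x ≠ x0}} {x y : P} (hx : x ≠ x0) (hy : y ≠ x0) :
    extIns x0 r S x y ↔ r ⟨x, hx⟩ ⟨y, hy⟩ := by
  constructor
  · rintro (⟨h, -⟩ | ⟨h, -⟩ | ⟨h, -⟩ | ⟨hx', hy', h⟩)
    · exact absurd h hx
    · exact absurd h hx
    · exact absurd h hy
    · exact h
  · intro h; exact Or.inr (Or.inr (Or.inr ⟨hx, hy, h⟩))

private lemma extIns_restrict {r : {x : P // x ≠ x0} → {x : P // x ≠ x0} → Prop}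
    {S : Set {x : P // x ≠ x0}} (x y : {x : P // x ≠ x0}) :
    extIns x0 r S (x : P) (y : P) ↔ r x y := by
  rw [extIns_ne x.2 y.2]

/-- The inserted order is a linear extension of `≤` on `P`, given the appropriate
conditions on the cut `S`. -/
private lemma extIns_isLinExt {r : {x : P // x ≠ x0} → {x : P // x ≠ x0} → Prop}
    {S : Set {x : P // x ≠ x0}}
    (hr : IsLinExt (fun x y : {x : P // x ≠ x0} => (x : P) ≤ (y : P)) r)
    (hdown : ∀ ⦃a b : {x : P // x ≠ x0}⦄, r a b → b ∈ S → a ∈ S)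
    (hD : ∀ z : {x : P // x ≠ x0}, (z : P) ≤ x0 → z ∈ S)
    (hU : ∀ z : {x : P // x ≠ x0}, z ∈ S → ¬ x0 ≤ (z : P)) :
    IsLinExt (fun x y : P => x ≤ y) (extIns x0 r S) := by
  letI := hr.1
  have hrefl : ∀ x, extIns x0 r S x x := by
    intro x
    by_cases hx : x = x0
    · subst hx; exact extIns_x0_x0 r S
    · exact (extIns_ne hx hx).2 (refl_of r _)
  have htrans : ∀ x y z, extIns x0 r S x y → extIns x0 r S y z → extIns x0 r S x z := by
    intro x y z h1 h2
    by_cases hx : x = x0 <;> by_cases hy : y = x0 <;> by_cases hz : z = x0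
    · subst hx; subst hy; subst hz; exact h1
    · subst hx; subst hy; exact h2
    · subst hx; subst hz; exact extIns_x0_x0 r S
    · subst hx
      rw [extIns_x0_left hy] at h1
      rw [extIns_ne hy hz] at h2
      rw [extIns_x0_left hz]
      exact fun hzS => h1 (hdown h2 hzS)
    · subst hy; subst hz; exact h1
    · subst hy
      rw [extIns_x0_right hx] at h1
      rw [extIns_x0_left hz] at h2
      rw [extIns_ne hx hz]
      rcases total_of r ⟨x, hx⟩ ⟨z, hz⟩ with h | h
      · exact h
      · exact absurd (hdown h h1) h2
    · subst hz
      rw [extIns_ne hx hy] at h1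
      rw [extIns_x0_right hy] at h2
      rw [extIns_x0_right hx]
      exact hdown h1 h2
    · rw [extIns_ne hx hy] at h1
      rw [extIns_ne hy hz] at h2
      rw [extIns_ne hx hz]
      exact trans_of r h1 h2
  have hanti : ∀ x y, extIns x0 r S x y → extIns x0 r S y x → x = y := by
    intro x y h1 h2
    by_cases hx : x = x0 <;> by_cases hy : y = x0
    · subst hx; subst hy; rfl
    · subst hx
      rw [extIns_x0_left hy] at h1
      rw [extIns_x0_right hy] at h2
      exact absurd h2 h1
    · subst hy
      rw [extIns_x0_right hx] at h1
      rw [extIns_x0_left hx] at h2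
      exact absurd h1 h2
    · rw [extIns_ne hx hy] at h1
      rw [extIns_ne hy hx] at h2
      have := antisymm_of r h1 h2
      exact congrArg Subtype.val this
  have htot : ∀ x y, extIns x0 r S x y ∨ extIns x0 r S y x := by
    intro x y
    by_cases hx : x = x0 <;> by_cases hy : y = x0
    · subst hx; subst hy; exact Or.inl (extIns_x0_x0 r S)
    · subst hx
      by_cases hS : ⟨y, hy⟩ ∈ S
      · exact Or.inr ((extIns_x0_right hy).2 hS)
      · exact Or.inl ((extIns_x0_left hy).2 hS)
    · subst hy
      by_cases hS : ⟨x, hx⟩ ∈ S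
      · exact Or.inl ((extIns_x0_right hx).2 hS)
      · exact Or.inr ((extIns_x0_left hx).2 hS)
    · rcases total_of r ⟨x, hx⟩ ⟨y, hy⟩ with h | h
      · exact Or.inl ((extIns_ne hx hy).2 h)
      · exact Or.inr ((extIns_ne hy hx).2 h)
  have hext : ∀ x y : P, x ≤ y → extIns x0 r S x y := by
    intro x y hxy
    by_cases hx : x = x0 <;> by_cases hy : y = x0
    · subst hx; subst hy; exact extIns_x0_x0 r S
    · subst hx
      exact (extIns_x0_left hy).2 (fun hS => hU _ hS hxy)
    · subst hy
      exact (extIns_x0_right hx).2 (hD _ hxy)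
    · exact (extIns_ne hx hy).2 (hr.2 ⟨x, hx⟩ ⟨y, hy⟩ hxy)
  exact ⟨{ refl := hrefl, trans := htrans, antisymm := hanti, total := htot }, hext⟩

variable {Q : Type*} [PartialOrder Q]

/-- Reorder a linear order `M` by putting the down-set `A` as an initial block. -/
private def blk (A : Set Q) (M : Q → Q → Prop) : Q → Q → Prop := fun x y =>
  (x ∈ A ∧ y ∉ A) ∨ ((x ∈ A ↔ y ∈ A) ∧ M x y)

private lemma blk_isLinExt {A : Set Q} {M : Q → Q → Prop}
    (hM : IsLinExt (· ≤ ·) M) (hA : ∀ ⦃a b : Q⦄, a ≤ b → b ∈ A → a ∈ A) :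
    IsLinExt (· ≤ ·) (blk A M) := by
  letI := hM.1
  have hrefl : ∀ x, blk A M x x := fun x => Or.inr ⟨Iff.rfl, refl_of M x⟩
  have htrans : ∀ x y z, blk A M x y → blk A M y z → blk A M x z := by
    rintro x y z (⟨hx, hy⟩ | ⟨hxy, h1⟩) (⟨hy', hz⟩ | ⟨hyz, h2⟩)
    · exact absurd hy' hy
    · exact Or.inl ⟨hx, fun hz => hy (hyz.2 hz)⟩
    · exact Or.inl ⟨hxy.2 hy', hz⟩
    · exact Or.inr ⟨hxy.trans hyz, trans_of M h1 h2⟩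
  have hanti : ∀ x y, blk A M x y → blk A M y x → x = y := by
    rintro x y (⟨hx, hy⟩ | ⟨hxy, h1⟩) (⟨hy', hx'⟩ | ⟨hyx, h2⟩)
    · exact absurd hy' hy
    · exact absurd (hyx.2 hx) hy
    · exact absurd (hxy.2 hy') hx'
    · exact antisymm_of M h1 h2
  have htot : ∀ x y, blk A M x y ∨ blk A M y x := by
    intro x y
    by_cases hx : x ∈ A <;> by_cases hy : y ∈ A
    · rcases total_of M x y with h | h
      · exact Or.inl (Or.inr ⟨iff_of_true hx hy, h⟩)
      · exact Or.inr (Or.inr ⟨iff_of_true hy hx, h⟩)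
    · exact Or.inl (Or.inl ⟨hx, hy⟩)
    · exact Or.inr (Or.inl ⟨hy, hx⟩)
    · rcases total_of M x y with h | h
      · exact Or.inl (Or.inr ⟨iff_of_false hx hy, h⟩)
      · exact Or.inr (Or.inr ⟨iff_of_false hy hx, h⟩)
  have hext : ∀ x y : Q, x ≤ y → blk A M x y := by
    intro x y hxy
    by_cases hx : x ∈ A <;> by_cases hy : y ∈ A
    · exact Or.inr ⟨iff_of_true hx hy, hM.2 x y hxy⟩
    · exact Or.inl ⟨hx, hy⟩
    · exact absurd (hA hxy hy) hx
    · exact Or.inr ⟨iff_of_false hx hy, hM.2 x y hxy⟩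
  exact ⟨{ refl := hrefl, trans := htrans, antisymm := hanti, total := htot }, hext⟩

private lemma blk_downClosed {A : Set Q} {M : Q → Q → Prop} :
    ∀ ⦃a b : Q⦄, blk A M a b → b ∈ A → a ∈ A := by
  rintro a b (⟨ha, -⟩ | ⟨hab, -⟩) hb
  · exact ha
  · exact hab.2 hb

end AuxDBp

/-- `DB⁺_p`: if `x₀ ∈ P`, `n ≥ 1`, and `L_0, …, L_{n-1}` is a family of linear
extensions realizing the subposet `P ∖ {x₀}`, then there are linear extensions
`L'_0, …, L'_n` realizing `P` such that for every `j < n - 1` the restriction of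
`L'_j` to `P ∖ {x₀}` equals `L_j`. -/
theorem stmt11 {P : Type*} [PartialOrder P] (x0 : P) (n : ℕ) (hn : 1 ≤ n)
    (L : Fin n → {x : P // x ≠ x0} → {x : P // x ≠ x0} → Prop)
    (hL : RealizedBy (fun x y : {x : P // x ≠ x0} => (x : P) ≤ (y : P)) L) :
    ∃ L' : Fin (n + 1) → P → P → Prop,
      RealizedBy (fun x y : P => x ≤ y) L' ∧
      ∀ j : Fin n, (j : ℕ) < n - 1 →
        ∀ x y : {x : P // x ≠ x0}, L' j.castSucc (x : P) (y : P) ↔ L j x y := by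
  classical
  obtain ⟨hLlin, hLreal⟩ := hL
  have hn' : n - 1 < n := by omega
  set m : Fin n := ⟨n - 1, hn'⟩ with hm
  set M := L m with hMdef
  letI hMord := (hLlin m).1
  have hMext := (hLlin m).2
  set D0 : Set {x : P // x ≠ x0} := {z | (z : P) ≤ x0} with hD0def
  set U0 : Set {x : P // x ≠ x0} := {z | x0 ≤ (z : P)} with hU0def
  have hD0down : ∀ ⦃a b : {x : P // x ≠ x0}⦄, (a : P) ≤ (b : P) → b ∈ D0 → a ∈ D0 :=
    fun a b hab hb => le_trans hab hb
  have hU0cdown : ∀ ⦃a b : {x : P // x ≠ x0}⦄, (a : P) ≤ (b : P) → b ∈ U0ᶜ → a ∈ U0ᶜ :=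
    fun a b hab hb ha => hb (le_trans ha hab)
  have hD0U : ∀ z : {x : P // x ≠ x0}, z ∈ D0 → ¬ x0 ≤ (z : P) :=
    fun z hz h => z.2 (le_antisymm hz h)
  have hD0U0c : ∀ z : {x : P // x ≠ x0}, (z : P) ≤ x0 → z ∈ U0ᶜ :=
    fun z hz h => z.2 (le_antisymm hz h)
  -- the two special block orders
  have hblkD : IsLinExt (fun x y : {x : P // x ≠ x0} => (x : P) ≤ (y : P)) (blk D0 M) :=
    blk_isLinExt (hLlin m) hD0down
  have hblkU : IsLinExt (fun x y : {x : P // x ≠ x0} => (x : P) ≤ (y : P)) (blk U0ᶜ M) :=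
    blk_isLinExt (hLlin m) hU0cdown
  -- key compatibility of the two block orders
  have hkey : ∀ a b : {x : P // x ≠ x0}, blk D0 M a b → blk U0ᶜ M a b → M a b := by
    rintro a b (⟨ha, hb⟩ | ⟨-, hM⟩) h2
    · rcases h2 with ⟨ha', hb'⟩ | ⟨-, hM⟩
      · have hbU : b ∈ U0 := not_not.mp hb'
        exact hMext a b (le_trans ha hbU)
      · exact hM
    · exact hM
  -- the family of extensions
  refine ⟨fun i =>
    if h : (i : ℕ) < n - 1 then
      extIns x0 (L ⟨(i : ℕ), by omega⟩)
        {z | ∃ w : {x : P // x ≠ x0}, (w : P) ≤ x0 ∧ L ⟨(i : ℕ), by omega⟩ z w}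
    else if h2 : (i : ℕ) = n - 1 then extIns x0 (blk D0 M) D0
    else extIns x0 (blk U0ᶜ M) U0ᶜ, ⟨?_, ?_⟩, ?_⟩
  · -- each member is a linear extension
    intro i
    beta_reduce
    by_cases h : (i : ℕ) < n - 1
    · rw [dif_pos h]
      have hi : (i : ℕ) < n := by omega
      set j : Fin n := ⟨(i : ℕ), hi⟩ with hj
      letI := (hLlin j).1
      refine extIns_isLinExt (hLlin j) ?_ ?_ ?_
      · rintro a b hab ⟨w, hw, hbw⟩
        exact ⟨w, hw, trans_of (L j) hab hbw⟩
      · intro z hz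
        exact ⟨z, hz, refl_of (L j) z⟩
      · rintro z ⟨w, hw, hzw⟩ hz
        have hwz : L j w z := (hLlin j).2 w z (le_trans hw hz)
        have : z = w := antisymm_of (L j) hzw hwz
        exact z.2 (le_antisymm (this ▸ hw) hz)
    · rw [dif_neg h]
      by_cases h2 : (i : ℕ) = n - 1
      · rw [dif_pos h2]
        exact extIns_isLinExt hblkD blk_downClosed (fun z hz => hz) hD0U
      · rw [dif_neg h2]
        exact extIns_isLinExt hblkU blk_downClosed hD0U0c
          (fun z hz h => hz h)
  · -- realization
    intro x y
    constructor
    · intro hxy i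
      by_cases h : (i : ℕ) < n - 1
      · rw [dif_pos h]
        have hi : (i : ℕ) < n := by omega
        set j : Fin n := ⟨(i : ℕ), hi⟩ with hj
        letI := (hLlin j).1
        exact (extIns_isLinExt (hLlin j)
          (by rintro a b hab ⟨w, hw, hbw⟩; exact ⟨w, hw, trans_of (L j) hab hbw⟩)
          (by intro z hz; exact ⟨z, hz, refl_of (L j) z⟩)
          (by rintro z ⟨w, hw, hzw⟩ hz
              have hwz : L j w z := (hLlin j).2 w z (le_trans hw hz)
              have : z = w := antisymm_of (L j) hzw hwz
              exact z.2 (le_antisymm (this ▸ hw) hz))).2 x y hxy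
      · rw [dif_neg h]
        by_cases h2 : (i : ℕ) = n - 1
        · rw [dif_pos h2]
          exact (extIns_isLinExt hblkD blk_downClosed (fun z hz => hz) hD0U).2 x y hxy
        · rw [dif_neg h2]
          exact (extIns_isLinExt hblkU blk_downClosed hD0U0c
            (fun z hz h => hz h)).2 x y hxy
    · intro h
      by_cases hx : x = x0 <;> by_cases hy : y = x0
      · subst hx; subst hy; exact le_refl _
      · -- x = x0, y ≠ x0 : use the last extension
        subst hx
        have hlast := h (Fin.last n)
        beta_reduce at hlast
        have h1 : ¬ ((Fin.last n : Fin (n + 1)) : ℕ) < n - 1 := by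
          simp only [Fin.val_last]; omega
        have h2 : ¬ ((Fin.last n : Fin (n + 1)) : ℕ) = n - 1 := by
          simp only [Fin.val_last]; omega
        rw [dif_neg h1, dif_neg h2] at hlast
        have := (extIns_x0_left hy).1 hlast
        exact not_not.mp this
      · -- x ≠ x0, y = x0 : use the (n-1)-st extension
        subst hy
        have hmid := h (⟨n - 1, by omega⟩ : Fin (n + 1))
        beta_reduce at hmid
        have h1 : ¬ ((⟨n - 1, by omega⟩ : Fin (n + 1)) : ℕ) < n - 1 := by simp
        have h2 : ((⟨n - 1, by omega⟩ : Fin (n + 1)) : ℕ) = n - 1 := rfl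
        rw [dif_neg h1, dif_pos h2] at hmid
        exact (extIns_x0_right hx).1 hmid
      · -- both differ from x0
        have hMxy : M ⟨x, hx⟩ ⟨y, hy⟩ := by
          have hmid := h (⟨n - 1, by omega⟩ : Fin (n + 1))
          beta_reduce at hmid
          have h1 : ¬ ((⟨n - 1, by omega⟩ : Fin (n + 1)) : ℕ) < n - 1 := by simp
          have h2 : ((⟨n - 1, by omega⟩ : Fin (n + 1)) : ℕ) = n - 1 := rfl
          rw [dif_neg h1, dif_pos h2] at hmid
          have hD := (extIns_ne hx hy).1 hmid
          have hlast := h (Fin.last n)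
          beta_reduce at hlast
          have h1' : ¬ ((Fin.last n : Fin (n + 1)) : ℕ) < n - 1 := by
            simp only [Fin.val_last]; omega
          have h2' : ¬ ((Fin.last n : Fin (n + 1)) : ℕ) = n - 1 := by
            simp only [Fin.val_last]; omega
          rw [dif_neg h1', dif_neg h2'] at hlast
          have hU := (extIns_ne hx hy).1 hlast
          exact hkey _ _ hD hU
        refine (hLreal ⟨x, hx⟩ ⟨y, hy⟩).2 ?_
        intro j
        by_cases hj : (j : ℕ) < n - 1
        · have hc := h j.castSucc
          beta_reduce at hc
          have h1 : ((j.castSucc : Fin (n + 1)) : ℕ) < n - 1 := by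
            simpa using hj
          rw [dif_pos h1] at hc
          have hje : (⟨((j.castSucc : Fin (n + 1)) : ℕ), by omega⟩ : Fin n) = j :=
            Fin.ext (by simp)
          have := (extIns_ne hx hy).1 hc
          rwa [hje] at this
        · have hje : j = m := Fin.ext (by simp [hm]; omega)
          rw [hje]
          exact hMxy
  · -- restrictions
    intro j hj x y
    beta_reduce
    have h1 : ((j.castSucc : Fin (n + 1)) : ℕ) < n - 1 := by simpa using hj
    rw [dif_pos h1]
    rw [extIns_restrict]
    have hje : (⟨((j.castSucc : Fin (n + 1)) : ℕ), by omega⟩ : Fin n) = j :=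
      Fin.ext (by simp)
    rw [hje]
end

section
/- For every n ≥ 2, the subposet of F_{n+2} obtained by removing the chain C = {a_n, b_{n+1}} (i.e., the induced order on {a_0, …, a_{n−1}, a_{n+1}, b_0, …, b_n}) is realized by a family of n linear extensions, but is not realized by any family of n − 1 linear extensions. Hence, since F_{n+2} has dimension n + 2, the bound dim(P) ≤ dim(P ∖ C) + 2 for removing one chain is sharp. -/
/-- The removed chain `C = {a_n, b_{n+1}}` inside `F (n+2)`. -/
def remChain (n : ℕ) : Set (Fin (n + 2) ⊕ Fin (n + 2)) :=
  {Sum.inl ⟨n, by omega⟩, Sum.inr ⟨n + 1, by omega⟩}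

/-!
The `k`-th extension of the standard realizer of `F m` lists the `a_i` (`i ≠ k`) upwards, then
`b_k` below `a_k`, then the `b_j` (`j ≠ k`) downwards; these `m` extensions reverse every
incomparable pair. Removing `a_n` and `b_{n+1}` from `F (n+2)` destroys the critical pairs
`(a_n, b_n)` and `(a_{n+1}, b_{n+1})`, and every other incomparable pair is already reversed by
one of the extensions with `k < n` (for `n ≥ 2` there is always such a `k` avoiding a given
index). Conversely, a realizer must reverse each critical pair `(a_k, b_k)` in some extension,
and no extension reverses two of them, since that would give `b_k < a_k ≤ b_l < a_l ≤ b_k`.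
-/

open Function

section Realizer

variable {P : Type*} {le : P → P → Prop}

lemma isLinExt_of_injective {α : Type*} [LinearOrder α] {f : P → α} (hf : Injective f)
    (hmono : ∀ x y, le x y → f x ≤ f y) : IsLinExt le (fun x y => f x ≤ f y) :=
  ⟨{ refl := fun _ => le_rfl
     trans := fun _ _ _ => le_trans
     antisymm := fun _ _ hxy hyx => hf (le_antisymm hxy hyx)
     total := fun _ _ => le_total _ _ }, hmono⟩

lemma realizedBy_of_injective {ι α : Type*} [LinearOrder α] {f : ι → P → α}
    (hf : ∀ i, Injective (f i)) (hmono : ∀ i x y, le x y → f i x ≤ f i y)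
    (hrev : ∀ x y, ¬ le x y → ∃ i, f i y < f i x) :
    RealizedBy le (fun i x y => f i x ≤ f i y) :=
  ⟨fun i => isLinExt_of_injective (hf i) (hmono i), fun x y =>
    ⟨fun h i => hmono i x y h, fun h => by_contra fun hxy =>
      (hrev x y hxy).elim fun i hi => (h i).not_gt hi⟩⟩

lemma card_le_of_realizedBy {ι κ : Type*} [Fintype ι] [Fintype κ] {L : ι → P → P → Prop}
    (hL : RealizedBy le L) (a b : κ → P) (hb : Injective b)
    (hcrit : ∀ k, ¬ le (a k) (b k)) (hcross : ∀ k l, k ≠ l → le (a k) (b l)) :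
    Fintype.card κ ≤ Fintype.card ι := by
  have hrev : ∀ k, ∃ i, ¬ L i (a k) (b k) := fun k => by
    by_contra! h
    exact hcrit k ((hL.2 _ _).2 h)
  choose f hf using hrev
  refine Fintype.card_le_of_injective f fun k l hkl => by_contra fun hne => ?_
  obtain ⟨hlin, hext⟩ := hL.1 (f k)
  have hk : L (f k) (b k) (a k) := (hlin.total _ _).resolve_left (hf k)
  have hl : L (f k) (b l) (a l) := (hlin.total _ _).resolve_left (hkl ▸ hf l)
  exact hne <| hb <| hlin.antisymm _ _ (hlin.trans _ _ _ hk (hext _ _ (hcross k l hne)))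
    (hlin.trans _ _ _ hl (hext _ _ (hcross l k (Ne.symm hne))))

end Realizer

section StandardExample

variable {m : ℕ} {i j k : Fin m}

@[simp] lemma fnLe_inl_inl : FnLe m (.inl i) (.inl j) ↔ i = j := by
  simp [FnLe, FnLt]

@[simp] lemma fnLe_inr_inr : FnLe m (.inr i) (.inr j) ↔ i = j := by
  simp [FnLe, FnLt]

@[simp] lemma fnLe_inl_inr : FnLe m (.inl i) (.inr j) ↔ i ≠ j := by
  simp [FnLe, FnLt]

@[simp] lemma fnLe_inr_inl : ¬ FnLe m (.inr j) (.inl i) := by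
  simp [FnLe, FnLt]

def fnRank (m : ℕ) (k : Fin m) : Fin m ⊕ Fin m → ℕ
  | .inl i => if i = k then m + 1 else i
  | .inr j => if j = k then m else m + 1 + (m - j)

lemma fnRank_injective (k : Fin m) : Injective (fnRank m k) := by
  rintro (i | i) (j | j) h <;> simp only [fnRank] at h <;> split_ifs at h <;> grind

lemma fnRank_inr_self_lt_inl_self : fnRank m k (.inr k) < fnRank m k (.inl k) := by
  simp [fnRank]

lemma fnRank_inl_lt_inr (hi : i ≠ k) : fnRank m k (.inl i) < fnRank m k (.inr j) := by
  simp only [fnRank, hi, if_false]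
  split_ifs <;> omega

lemma fnRank_inl_self_lt_inr (hj : j ≠ k) : fnRank m k (.inl k) < fnRank m k (.inr j) := by
  simp only [fnRank, hj, if_true, if_false]
  omega

lemma fnRank_inl_lt_inl_self (hi : i ≠ k) : fnRank m k (.inl i) < fnRank m k (.inl k) := by
  simp only [fnRank, hi, if_true, if_false]
  omega

lemma fnRank_inl_lt_inl (hi : i ≠ k) (hj : j ≠ k) (hij : i < j) :
    fnRank m k (.inl i) < fnRank m k (.inl j) := by
  simpa [fnRank, hi, hj] using hij

lemma fnRank_inr_self_lt_inr (hj : j ≠ k) : fnRank m k (.inr k) < fnRank m k (.inr j) := by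
  simp only [fnRank, hj, if_true, if_false]
  omega

lemma fnRank_inr_lt_inr (hi : i ≠ k) (hj : j ≠ k) (hij : i < j) :
    fnRank m k (.inr j) < fnRank m k (.inr i) := by
  simp only [fnRank, hi, hj, if_false]
  omega

lemma fnRank_mono (k : Fin m) {x y : Fin m ⊕ Fin m} (h : FnLe m x y) :
    fnRank m k x ≤ fnRank m k y := by
  rcases h with rfl | ⟨i, j, hij, rfl, rfl⟩
  · rfl
  · obtain rfl | hi := eq_or_ne i k
    · exact (fnRank_inl_self_lt_inr hij.symm).le
    · exact (fnRank_inl_lt_inr hi).le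

lemma exists_fnRank_lt (hm : 2 ≤ m) {x y : Fin m ⊕ Fin m} (h : ¬ FnLe m x y) :
    ∃ k, fnRank m k y < fnRank m k x := by
  have : Nontrivial (Fin m) := Fin.nontrivial_iff_two_le.2 hm
  rcases x with i | i <;> rcases y with j | j <;>
    simp only [fnLe_inl_inl, fnLe_inr_inr, fnLe_inl_inr, fnLe_inr_inl, not_not] at h
  · exact ⟨i, fnRank_inl_lt_inl_self (Ne.symm h)⟩
  · exact ⟨i, h ▸ fnRank_inr_self_lt_inl_self⟩
  · obtain ⟨k, hk⟩ := exists_ne j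
    exact ⟨k, fnRank_inl_lt_inr hk.symm⟩
  · exact ⟨j, fnRank_inr_self_lt_inr h⟩

end StandardExample

section RemovedChain

variable {n : ℕ}

@[simp] lemma inl_mem_remChain {i : Fin (n + 2)} : .inl i ∈ remChain n ↔ (i : ℕ) = n := by
  simp [remChain, Fin.ext_iff]

@[simp] lemma inr_mem_remChain {j : Fin (n + 2)} : .inr j ∈ remChain n ↔ (j : ℕ) = n + 1 := by
  simp [remChain, Fin.ext_iff]

lemma exists_castAdd_ne (hn : 2 ≤ n) (i : Fin (n + 2)) : ∃ k : Fin n, k.castAdd 2 ≠ i := by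
  by_cases hi : (i : ℕ) = 0
  · exact ⟨⟨1, by omega⟩, by simp [Fin.ext_iff, hi]⟩
  · exact ⟨⟨0, by omega⟩, by simp only [ne_eq, Fin.ext_iff, Fin.val_castAdd]; omega⟩

lemma exists_fnRank_castAdd_lt (hn : 2 ≤ n) {x y : Fin (n + 2) ⊕ Fin (n + 2)}
    (hx : x ∉ remChain n) (hy : y ∉ remChain n) (h : ¬ FnLe (n + 2) x y) :
    ∃ k : Fin n, fnRank (n + 2) (k.castAdd 2) y < fnRank (n + 2) (k.castAdd 2) x := by
  rcases x with i | i <;> rcases y with j | j <;>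
    simp only [fnLe_inl_inl, fnLe_inr_inr, fnLe_inl_inr, fnLe_inr_inl, not_not,
      inl_mem_remChain, inr_mem_remChain] at h hx hy
  · by_cases hi : (i : ℕ) < n
    · obtain ⟨k, rfl⟩ : ∃ k : Fin n, k.castAdd 2 = i := ⟨⟨i, hi⟩, rfl⟩
      exact ⟨k, fnRank_inl_lt_inl_self (Ne.symm h)⟩
    · obtain ⟨k, hk⟩ := exists_castAdd_ne hn j
      refine ⟨k, fnRank_inl_lt_inl hk.symm ?_ ?_⟩ <;>
        simp only [ne_eq, Fin.ext_iff, Fin.lt_def, Fin.val_castAdd] <;> omega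
  · subst h
    obtain ⟨k, rfl⟩ : ∃ k : Fin n, k.castAdd 2 = i := ⟨⟨i, by omega⟩, rfl⟩
    exact ⟨k, fnRank_inr_self_lt_inl_self⟩
  · obtain ⟨k, hk⟩ := exists_castAdd_ne hn j
    exact ⟨k, fnRank_inl_lt_inr hk.symm⟩
  · by_cases hj : (j : ℕ) < n
    · obtain ⟨k, rfl⟩ : ∃ k : Fin n, k.castAdd 2 = j := ⟨⟨j, hj⟩, rfl⟩
      exact ⟨k, fnRank_inr_self_lt_inr h⟩
    · obtain ⟨k, hk⟩ := exists_castAdd_ne hn i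
      refine ⟨k, fnRank_inr_lt_inr hk.symm ?_ ?_⟩ <;>
        simp only [ne_eq, Fin.ext_iff, Fin.lt_def, Fin.val_castAdd] <;> omega

end RemovedChain

/-- For every `n ≥ 2`: the subposet of `F (n+2)` obtained by removing the chain
`C = {a_n, b_{n+1}}` is realized by `n` linear extensions but by no family of `n - 1`
linear extensions; moreover `F (n+2)` itself is realized by `n + 2` linear extensions
and by no family of `n + 1` linear extensions (it has dimension `n + 2`), so the bound
`dim(P) ≤ dim(P ∖ C) + 2` for the removal of one chain is sharp. -/
theorem stmt12 (n : ℕ) (hn : 2 ≤ n) :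
    (∃ L : Fin n → {x // x ∉ remChain n} → {x // x ∉ remChain n} → Prop,
      RealizedBy (fun x y : {x // x ∉ remChain n} => FnLe (n + 2) x.1 y.1) L) ∧
    (∀ L : Fin (n - 1) → {x // x ∉ remChain n} → {x // x ∉ remChain n} → Prop,
      ¬ RealizedBy (fun x y : {x // x ∉ remChain n} => FnLe (n + 2) x.1 y.1) L) ∧
    (∃ L : Fin (n + 2) → (Fin (n + 2) ⊕ Fin (n + 2)) → (Fin (n + 2) ⊕ Fin (n + 2)) → Prop,
      RealizedBy (FnLe (n + 2)) L) ∧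
    (∀ L : Fin (n + 1) → (Fin (n + 2) ⊕ Fin (n + 2)) → (Fin (n + 2) ⊕ Fin (n + 2)) → Prop,
      ¬ RealizedBy (FnLe (n + 2)) L) := by
  refine ⟨?_, fun L hL => ?_, ?_, fun L hL => ?_⟩
  · exact ⟨_, realizedBy_of_injective (f := fun k x => fnRank (n + 2) (k.castAdd 2) x.1)
      (fun _ => (fnRank_injective _).comp Subtype.val_injective) (fun _ _ _ => fnRank_mono _)
      (fun x y => exists_fnRank_castAdd_lt hn x.2 y.2)⟩
  · have := card_le_of_realizedBy hL
      (fun k : Fin n => ⟨.inl (k.castAdd 2), by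
        simp only [inl_mem_remChain, Fin.val_castAdd]; omega⟩)
      (fun k => ⟨.inr (k.castAdd 2), by
        simp only [inr_mem_remChain, Fin.val_castAdd]; omega⟩)
      (fun k l hkl => by simpa using hkl) (by simp) (fun k l hkl => by simpa using hkl)
    simp only [Fintype.card_fin] at this
    omega
  · exact ⟨_, realizedBy_of_injective fnRank_injective (fun k _ _ => fnRank_mono k)
      (fun _ _ => exists_fnRank_lt (by omega))⟩
  · have := card_le_of_realizedBy hL (.inl ·) (.inr ·) Sum.inr_injective (by simp)
      (fun _ _ => fnLe_inl_inr.2)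
    simp only [Fintype.card_fin] at this
    omega
end

section
/- In the poset F_5, the sets C₀ = {a_0, b_1} and C₁ = {a_2, b_3} are chains that are not incomparable (since a_0 ≺ b_3 and a_2 ≺ b_1), the subposet of F_5 on {a_1, a_3, a_4, b_0, b_2, b_4} is realized by 2 linear extensions, and F_5 is not realized by any family of 4 linear extensions. Hence the bound dim(P) ≤ dim(P ∖ (C₀ ∪ C₁)) + 2 fails when the two removed chains are not required to be incomparable. -/
/-- The chain `C₀ = {a_0, b_1}` of `F 5`. -/
def C0F5 : Set (Fin 5 ⊕ Fin 5) := {Sum.inl 0, Sum.inr 1}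

/-- The chain `C₁ = {a_2, b_3}` of `F 5`. -/
def C1F5 : Set (Fin 5 ⊕ Fin 5) := {Sum.inl 2, Sum.inr 3}

/-- Rank function for the first linear extension on the complement subposet:
`a4 < a1 < a3 < b2 < b0 < b4`, removed elements get large distinct ranks. -/
def rk0 : Fin 5 ⊕ Fin 5 → ℕ
  | Sum.inl i => [6, 1, 7, 2, 0].get i
  | Sum.inr j => [4, 8, 3, 9, 5].get j

/-- Rank function for the second linear extension on the complement subposet:
`a3 < a1 < b4 < a4 < b0 < b2`. -/
def rk1 : Fin 5 ⊕ Fin 5 → ℕ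
  | Sum.inl i => [6, 1, 7, 0, 3].get i
  | Sum.inr j => [4, 8, 5, 9, 2].get j

lemma rk0_inj : ∀ u v : Fin 5 ⊕ Fin 5, rk0 u = rk0 v → u = v := by decide

lemma rk1_inj : ∀ u v : Fin 5 ⊕ Fin 5, rk1 u = rk1 v → u = v := by decide

set_option synthInstance.maxSize 2048 in
lemma rk_key : ∀ u v : Fin 5 ⊕ Fin 5,
    u ≠ Sum.inl 0 → u ≠ Sum.inr 1 → u ≠ Sum.inl 2 → u ≠ Sum.inr 3 →
    v ≠ Sum.inl 0 → v ≠ Sum.inr 1 → v ≠ Sum.inl 2 → v ≠ Sum.inr 3 →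
    ((u = v ∨ ∃ i j : Fin 5, i ≠ j ∧ u = Sum.inl i ∧ v = Sum.inr j) ↔
      (rk0 u ≤ rk0 v ∧ rk1 u ≤ rk1 v)) := by decide

lemma notmem_iff (u : Fin 5 ⊕ Fin 5) : u ∉ C0F5 ∪ C1F5 ↔
    u ≠ Sum.inl 0 ∧ u ≠ Sum.inr 1 ∧ u ≠ Sum.inl 2 ∧ u ≠ Sum.inr 3 := by
  simp only [C0F5, C1F5, Set.mem_union, Set.mem_insert_iff, Set.mem_singleton_iff, not_or]
  tauto

/-- In `F 5`: `C₀ = {a_0, b_1}` and `C₁ = {a_2, b_3}` are chains which are not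
incomparable (indeed `a_0 ≺ b_3` and `a_2 ≺ b_1`), the subposet on the complement
`{a_1, a_3, a_4, b_0, b_2, b_4}` is realized by `2` linear extensions, and `F 5` is not
realized by any family of `4` linear extensions.  Hence the bound
`dim(P) ≤ dim(P ∖ (C₀ ∪ C₁)) + 2` fails for chains that are not incomparable. -/
theorem stmt15 :
    IsChain (FnLe 5) C0F5 ∧ IsChain (FnLe 5) C1F5 ∧
    ¬ (∀ y ∈ C0F5, ∀ z ∈ C1F5, ¬ FnLe 5 y z ∧ ¬ FnLe 5 z y) ∧
    FnLt 5 (Sum.inl 0) (Sum.inr 3) ∧ FnLt 5 (Sum.inl 2) (Sum.inr 1) ∧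
    (∃ L : Fin 2 → {x // x ∉ C0F5 ∪ C1F5} → {x // x ∉ C0F5 ∪ C1F5} → Prop,
      RealizedBy (fun x y : {x // x ∉ C0F5 ∪ C1F5} => FnLe 5 x.1 y.1) L) ∧
    (∀ L : Fin 4 → (Fin 5 ⊕ Fin 5) → (Fin 5 ⊕ Fin 5) → Prop,
      ¬ RealizedBy (FnLe 5) L) := by
  refine ⟨?_, ?_, ?_, ⟨0, 3, by decide, rfl, rfl⟩, ⟨2, 1, by decide, rfl, rfl⟩, ?_, ?_⟩
  · -- C0 is a chain
    rintro x hx y hy hne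
    simp only [C0F5, Set.mem_insert_iff, Set.mem_singleton_iff] at hx hy
    rcases hx with rfl | rfl <;> rcases hy with rfl | rfl
    · exact absurd rfl hne
    · exact Or.inl (Or.inr ⟨0, 1, by decide, rfl, rfl⟩)
    · exact Or.inr (Or.inr ⟨0, 1, by decide, rfl, rfl⟩)
    · exact absurd rfl hne
  · -- C1 is a chain
    rintro x hx y hy hne
    simp only [C1F5, Set.mem_insert_iff, Set.mem_singleton_iff] at hx hy
    rcases hx with rfl | rfl <;> rcases hy with rfl | rfl
    · exact absurd rfl hne
    · exact Or.inl (Or.inr ⟨2, 3, by decide, rfl, rfl⟩)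
    · exact Or.inr (Or.inr ⟨2, 3, by decide, rfl, rfl⟩)
    · exact absurd rfl hne
  · -- not incomparable
    intro h
    have h1 : (Sum.inl 0 : Fin 5 ⊕ Fin 5) ∈ C0F5 := Or.inl rfl
    have h2 : (Sum.inr 3 : Fin 5 ⊕ Fin 5) ∈ C1F5 := Or.inr rfl
    exact (h _ h1 _ h2).1 (Or.inr ⟨0, 3, by decide, rfl, rfl⟩)
  · -- subposet realized by 2 linear extensions
    set S := C0F5 ∪ C1F5
    refine ⟨fun k x y => (if k = 0 then rk0 else rk1) x.1 ≤ (if k = 0 then rk0 else rk1) y.1,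
      fun k => ⟨?_, ?_⟩, fun x y => ?_⟩
    · -- linear order
      set f := (if k = 0 then rk0 else rk1) with hf
      refine { refl := fun x => le_refl _,
               trans := fun a b c h1 h2 => le_trans h1 h2,
               antisymm := fun a b h1 h2 => ?_,
               total := fun a b => le_total _ _ }
      have he : f a.1 = f b.1 := le_antisymm h1 h2
      rcases Classical.em (k = 0) with rfl | hk
      · simp only [hf, if_pos rfl] at he
        exact Subtype.ext (rk0_inj _ _ he)
      · simp only [hf, if_neg hk] at he
        exact Subtype.ext (rk1_inj _ _ he)
    · -- extension
      intro x y hxy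
      obtain ⟨hx1, hx2, hx3, hx4⟩ := (notmem_iff x.1).1 x.2
      obtain ⟨hy1, hy2, hy3, hy4⟩ := (notmem_iff y.1).1 y.2
      have := (rk_key x.1 y.1 hx1 hx2 hx3 hx4 hy1 hy2 hy3 hy4).1 hxy
      split <;> [exact this.1; exact this.2]
    · -- intersection
      obtain ⟨hx1, hx2, hx3, hx4⟩ := (notmem_iff x.1).1 x.2
      obtain ⟨hy1, hy2, hy3, hy4⟩ := (notmem_iff y.1).1 y.2
      show (x.1 = y.1 ∨ ∃ i j : Fin 5, i ≠ j ∧ x.1 = Sum.inl i ∧ y.1 = Sum.inr j) ↔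
        ∀ k : Fin 2, (if k = 0 then rk0 else rk1) x.1 ≤ (if k = 0 then rk0 else rk1) y.1
      rw [rk_key x.1 y.1 hx1 hx2 hx3 hx4 hy1 hy2 hy3 hy4]
      constructor
      · rintro ⟨h1, h2⟩ k
        fin_cases k <;> simp [h1, h2]
      · intro h
        exact ⟨by simpa using h 0, by simpa using h 1⟩
  · -- F5 not realized by 4 linear extensions
    rintro L ⟨hext, hiff⟩
    have hnot : ∀ i : Fin 5, ¬ FnLe 5 (Sum.inl i) (Sum.inr i) := by
      rintro i (h | ⟨p, q, hpq, hp, hq⟩)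
      · exact Sum.inl_ne_inr h
      · cases hp; cases hq; exact hpq rfl
    have hrev : ∀ i : Fin 5, ∃ k : Fin 4, L k (Sum.inr i) (Sum.inl i) := by
      intro i
      have := (hiff (Sum.inl i) (Sum.inr i)).not.1 (hnot i)
      push_neg at this
      obtain ⟨k, hk⟩ := this
      haveI : IsLinearOrder _ (L k) := (hext k).1
      exact ⟨k, (total_of (L k) _ _).resolve_left hk⟩
    choose f hfrev using hrev
    obtain ⟨i, j, hij, hfij⟩ :=
      Fintype.exists_ne_map_eq_of_card_lt f (by norm_num)
    obtain ⟨k, hki, hkj⟩ : ∃ k, f i = k ∧ f j = k := ⟨f i, rfl, hfij.symm⟩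
    haveI : IsLinearOrder _ (L k) := (hext k).1
    have h1 : L k (Sum.inr i) (Sum.inl i) := hki ▸ hfrev i
    have h2 : L k (Sum.inr j) (Sum.inl j) := hkj ▸ hfrev j
    have h3 : L k (Sum.inl i) (Sum.inr j) :=
      (hext k).2 _ _ (Or.inr ⟨i, j, hij, rfl, rfl⟩)
    have h4 : L k (Sum.inl j) (Sum.inr i) :=
      (hext k).2 _ _ (Or.inr ⟨j, i, hij.symm, rfl, rfl⟩)
    have hij2 : L k (Sum.inl i) (Sum.inl j) := trans_of (L k) h3 h2
    have hji2 : L k (Sum.inl j) (Sum.inl i) := trans_of (L k) h4 h1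
    have : (Sum.inl i : Fin 5 ⊕ Fin 5) = Sum.inl j := antisymm_of (L k) hij2 hji2
    exact hij (Sum.inl_injective this)
end

section
/- In the poset F_6, with chains C₀ = {a_0, b_1} and C₁ = {a_2, b_3}, the subposet of F_6 on {a_1, a_3, a_4, a_5, b_0, b_2, b_4, b_5} is realized by 2 linear extensions, while F_6 is not realized by any family of 5 linear extensions. Hence dim(F_6) = 6 = dim(F_6 ∖ (C₀ ∪ C₁)) + 4, showing that the bound dim(P) ≤ dim(P ∖ (C₀ ∪ C₁)) + 4 for removing two arbitrary chains is sharp. -/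
/-- The chain `C₀ = {a_0, b_1}` of `F 6`. -/
def C0F6 : Set (Fin 6 ⊕ Fin 6) := {Sum.inl 0, Sum.inr 1}

/-- The chain `C₁ = {a_2, b_3}` of `F 6`. -/
def C1F6 : Set (Fin 6 ⊕ Fin 6) := {Sum.inl 2, Sum.inr 3}

section Aux

instance (n : ℕ) (u v : Fin n ⊕ Fin n) : Decidable (FnLt n u v) := by
  unfold FnLt; infer_instance

instance (n : ℕ) (u v : Fin n ⊕ Fin n) : Decidable (FnLe n u v) := by
  unfold FnLe; infer_instance

instance : DecidablePred (· ∈ C0F6) := fun x =>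
  decidable_of_iff (x = Sum.inl 0 ∨ x = Sum.inr 1) (by simp [C0F6])

instance : DecidablePred (· ∈ C1F6) := fun x =>
  decidable_of_iff (x = Sum.inl 2 ∨ x = Sum.inr 3) (by simp [C1F6])

instance : DecidablePred (fun x : Fin 6 ⊕ Fin 6 => x ∉ C0F6 ∪ C1F6) := fun x =>
  decidable_of_iff (¬ (x ∈ C0F6 ∨ x ∈ C1F6)) (by simp [Set.mem_union])

/-- Linear order from an injective rank function. -/
lemma isLinearOrder_of_rank {P : Type*} (f : P → ℕ) (hf : Function.Injective f) :
    IsLinearOrder P (fun x y => f x ≤ f y) where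
  refl x := le_refl _
  trans _ _ _ h h' := le_trans h h'
  antisymm _ _ h h' := hf (le_antisymm h h')
  total x y := le_total _ _

/-- First rank function for the subposet realizer. -/
def rkA : Fin 6 ⊕ Fin 6 → ℕ := Sum.elim ![8, 1, 9, 2, 0, 4] ![5, 10, 6, 11, 7, 3]

/-- Second rank function for the subposet realizer. -/
def rkB : Fin 6 ⊕ Fin 6 → ℕ := Sum.elim ![8, 2, 9, 1, 4, 0] ![6, 10, 5, 11, 3, 7]

/-- Rank functions for the realizer of `F 6`. -/
def rkF (k : Fin 6) : Fin 6 ⊕ Fin 6 → ℕ :=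
  Sum.elim (fun i => if i = k then 7 else i.val) (fun j => if j = k then 6 else 8 + j.val)

end Aux

/-- In `F 6`, with the chains `C₀ = {a_0, b_1}` and `C₁ = {a_2, b_3}`: the subposet on
the complement `{a_1, a_3, a_4, a_5, b_0, b_2, b_4, b_5}` is realized by `2` linear
extensions but not by a single one, while `F 6` is realized by `6` linear extensions but
by no family of `5`.  Hence `dim(F 6) = 6 = dim(F 6 ∖ (C₀ ∪ C₁)) + 4`, so the bound
`dim(P) ≤ dim(P ∖ (C₀ ∪ C₁)) + 4` for removing two arbitrary chains is sharp. -/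
theorem stmt16 :
    IsChain (FnLe 6) C0F6 ∧ IsChain (FnLe 6) C1F6 ∧
    (∃ L : Fin 2 → {x // x ∉ C0F6 ∪ C1F6} → {x // x ∉ C0F6 ∪ C1F6} → Prop,
      RealizedBy (fun x y : {x // x ∉ C0F6 ∪ C1F6} => FnLe 6 x.1 y.1) L) ∧
    (∀ L : Fin 1 → {x // x ∉ C0F6 ∪ C1F6} → {x // x ∉ C0F6 ∪ C1F6} → Prop,
      ¬ RealizedBy (fun x y : {x // x ∉ C0F6 ∪ C1F6} => FnLe 6 x.1 y.1) L) ∧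
    (∃ L : Fin 6 → (Fin 6 ⊕ Fin 6) → (Fin 6 ⊕ Fin 6) → Prop,
      RealizedBy (FnLe 6) L) ∧
    (∀ L : Fin 5 → (Fin 6 ⊕ Fin 6) → (Fin 6 ⊕ Fin 6) → Prop,
      ¬ RealizedBy (FnLe 6) L) := by
  refine ⟨?_, ?_, ?_, ?_, ?_, ?_⟩
  · -- C₀ is a chain
    intro x hx y hy hne
    simp only [C0F6, Set.mem_insert_iff, Set.mem_singleton_iff] at hx hy
    rcases hx with rfl | rfl <;> rcases hy with rfl | rfl <;>
      first
        | exact absurd rfl hne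
        | exact Or.inl (Or.inr ⟨0, 1, by decide, rfl, rfl⟩)
        | exact Or.inr (Or.inr ⟨0, 1, by decide, rfl, rfl⟩)
  · -- C₁ is a chain
    intro x hx y hy hne
    simp only [C1F6, Set.mem_insert_iff, Set.mem_singleton_iff] at hx hy
    rcases hx with rfl | rfl <;> rcases hy with rfl | rfl <;>
      first
        | exact absurd rfl hne
        | exact Or.inl (Or.inr ⟨2, 3, by decide, rfl, rfl⟩)
        | exact Or.inr (Or.inr ⟨2, 3, by decide, rfl, rfl⟩)
  · -- the subposet is realized by 2 linear extensions
    refine ⟨fun i x y => (if i = 0 then rkA else rkB) x.1 ≤ (if i = 0 then rkA else rkB) y.1,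
      fun i => ⟨isLinearOrder_of_rank _ ?_, ?_⟩, ?_⟩
    · intro x y h
      have : (if i = 0 then rkA else rkB) x.1 = (if i = 0 then rkA else rkB) y.1 := h
      have hinj : ∀ u v : Fin 6 ⊕ Fin 6, rkA u = rkA v → u = v := by decide
      have hinj' : ∀ u v : Fin 6 ⊕ Fin 6, rkB u = rkB v → u = v := by decide
      split at this <;> exact Subtype.ext (by first | exact hinj _ _ this | exact hinj' _ _ this)
    · intro x y h
      have hx := x.2
      have hy := y.2
      revert h
      show FnLe 6 x.1 y.1 → _
      have : ∀ u v : Fin 6 ⊕ Fin 6, u ∉ C0F6 ∪ C1F6 → v ∉ C0F6 ∪ C1F6 →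
          FnLe 6 u v → (rkA u ≤ rkA v ∧ rkB u ≤ rkB v) := by decide
      intro h
      rcases i with ⟨i, hi⟩
      interval_cases i
      · simpa using (this _ _ hx hy h).1
      · simpa using (this _ _ hx hy h).2
    · have key : ∀ u v : Fin 6 ⊕ Fin 6, u ∉ C0F6 ∪ C1F6 → v ∉ C0F6 ∪ C1F6 →
          (FnLe 6 u v ↔ (rkA u ≤ rkA v ∧ rkB u ≤ rkB v)) := by decide
      intro x y
      show FnLe 6 x.1 y.1 ↔ ∀ i : Fin 2,
        (if i = 0 then rkA else rkB) x.1 ≤ (if i = 0 then rkA else rkB) y.1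
      rw [key x.1 y.1 x.2 y.2]
      constructor
      · rintro ⟨hA, hB⟩ ⟨i, hi⟩
        interval_cases i
        · simpa using hA
        · simpa using hB
      · intro h
        exact ⟨by simpa using h 0, by simpa using h 1⟩
  · -- the subposet needs 2 extensions
    rintro L ⟨hlin, hiff⟩
    have h1 : (Sum.inl 1 : Fin 6 ⊕ Fin 6) ∉ C0F6 ∪ C1F6 := by decide
    have h3 : (Sum.inl 3 : Fin 6 ⊕ Fin 6) ∉ C0F6 ∪ C1F6 := by decide
    let x : {x // x ∉ C0F6 ∪ C1F6} := ⟨Sum.inl 1, h1⟩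
    let y : {x // x ∉ C0F6 ∪ C1F6} := ⟨Sum.inl 3, h3⟩
    have hnxy : ¬ FnLe 6 (Sum.inl 1) (Sum.inl 3) := by decide
    have hnyx : ¬ FnLe 6 (Sum.inl 3) (Sum.inl 1) := by decide
    rcases (hlin 0).1.toTotal.total x y with h | h
    · exact hnxy ((hiff x y).2 (fun i => by rw [Subsingleton.elim i 0]; exact h))
    · exact hnyx ((hiff y x).2 (fun i => by rw [Subsingleton.elim i 0]; exact h))
  · -- F 6 realized by 6 extensions
    refine ⟨fun k x y => rkF k x ≤ rkF k y, fun k => ⟨isLinearOrder_of_rank _ ?_, ?_⟩, ?_⟩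
    · have : ∀ k : Fin 6, ∀ u v : Fin 6 ⊕ Fin 6, rkF k u = rkF k v → u = v := by decide
      exact fun u v h => this k u v h
    · have : ∀ k : Fin 6, ∀ u v : Fin 6 ⊕ Fin 6, FnLe 6 u v → rkF k u ≤ rkF k v := by decide
      exact this k
    · have : ∀ u v : Fin 6 ⊕ Fin 6, FnLe 6 u v ↔ ∀ k : Fin 6, rkF k u ≤ rkF k v := by decide
      exact this
  · -- F 6 not realized by 5 extensions
    rintro L ⟨hlin, hiff⟩
    have hincomp : ∀ i : Fin 6, ¬ FnLe 6 (Sum.inl i) (Sum.inr i) := by decide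
    have hrev : ∀ i : Fin 6, ∃ k : Fin 5, L k (Sum.inr i) (Sum.inl i) := by
      intro i
      have := hincomp i
      rw [hiff] at this
      push_neg at this
      obtain ⟨k, hk⟩ := this
      rcases (hlin k).1.toTotal.total (Sum.inl i) (Sum.inr i) with h | h
      · exact absurd h hk
      · exact ⟨k, h⟩
    choose f hf using hrev
    obtain ⟨i, j, hij, hfij⟩ :=
      Fintype.exists_ne_map_eq_of_card_lt f (by simp)
    have hki : L (f i) (Sum.inr i) (Sum.inl i) := hf i
    have hkj : L (f i) (Sum.inr j) (Sum.inl j) := by rw [hfij]; exact hf j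
    have hij' : L (f i) (Sum.inl i) (Sum.inr j) :=
      (hiff _ _).1 (Or.inr ⟨i, j, hij, rfl, rfl⟩) (f i)
    have hji' : L (f i) (Sum.inl j) (Sum.inr i) :=
      (hiff _ _).1 (Or.inr ⟨j, i, hij.symm, rfl, rfl⟩) (f i)
    have htrans := (hlin (f i)).1.toIsPartialOrder.toIsPreorder.toIsTrans.trans
    have h1 : L (f i) (Sum.inr i) (Sum.inr j) := htrans _ _ _ hki hij'
    have h2 : L (f i) (Sum.inr j) (Sum.inr i) := htrans _ _ _ hkj hji'
    have := (hlin (f i)).1.toIsPartialOrder.toAntisymm.antisymm _ _ h1 h2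
    exact hij (Sum.inr.inj this)
end

section
/- Let k ≥ 3 and let f, g : ℕ → ℕ be injective functions with disjoint ranges. Then the relation ≺ on the set P^k (defined in the context) is a strict partial order, i.e., it is irreflexive and transitive; moreover, for each m ∈ ℕ, if m ∉ ran(f) ∪ ran(g) then the level P^k_m = {z : ℓ(z) = m} is the two-element antichain {x^m, y^m}, and if m ∈ ran(f) or m ∈ ran(g) then the level P^k_m with the restricted order is order-isomorphic to F_k. -/
/-- The underlying set of the poset `P^k`: elements `x^i, y^i` for `i ∈ ℕ` and
`c^r_j, d^r_j, p^s_j, q^s_j` for `j < k - 1` and `r, s ∈ ℕ`. -/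
inductive PkElem (k : ℕ) : Type where
  | x (i : ℕ)
  | y (i : ℕ)
  | c (j : Fin (k - 1)) (r : ℕ)
  | d (j : Fin (k - 1)) (r : ℕ)
  | p (j : Fin (k - 1)) (s : ℕ)
  | q (j : Fin (k - 1)) (s : ℕ)

/-- The level function `ℓ` of `P^k`. -/
def pkLevel (k : ℕ) (f g : ℕ → ℕ) : PkElem k → ℕ
  | .x i => i
  | .y i => i
  | .c _ r => f r
  | .d _ r => f r
  | .p _ s => g s
  | .q _ s => g s

/-- The intra-level strict comparabilities of `P^k` (to be taken together with
equality of levels): `x^m ≺ d^r_j`, `c^r_j ≺ y^m`, `c^r_j ≺ d^r_{j'}` for `j ≠ j'`,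
`p^s_j ≺ x^m`, `y^m ≺ q^s_j`, and `p^s_j ≺ q^s_{j'}` for `j ≠ j'`. -/
def pkSameLevelLt (k : ℕ) : PkElem k → PkElem k → Prop
  | .x _, .d _ _ => True
  | .c _ _, .y _ => True
  | .c j r, .d j' r' => r = r' ∧ j ≠ j'
  | .p _ _, .x _ => True
  | .y _, .q _ _ => True
  | .p j s, .q j' s' => s = s' ∧ j ≠ j'
  | _, _ => False

/-- The strict relation `≺` on `P^k`: `u ≺ v` iff `ℓ(u) < ℓ(v)`, or `ℓ(u) = ℓ(v)` and
`u ≺ v` is one of the stipulated intra-level comparabilities. -/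
def pkLt (k : ℕ) (f g : ℕ → ℕ) (u v : PkElem k) : Prop :=
  pkLevel k f g u < pkLevel k f g v ∨
    (pkLevel k f g u = pkLevel k f g v ∧ pkSameLevelLt k u v)

lemma pk_irrefl (k : ℕ) (f g : ℕ → ℕ) : ∀ u : PkElem k, ¬ pkLt k f g u u := by
  intro u; cases u <;> simp [pkLt, pkSameLevelLt]

lemma pk_same_trans (k : ℕ) (f g : ℕ → ℕ) (hfg : ∀ r s, f r ≠ g s) :
    ∀ u v w : PkElem k, pkLevel k f g u = pkLevel k f g v →
      pkLevel k f g v = pkLevel k f g w →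
      pkSameLevelLt k u v → pkSameLevelLt k v w → False := by
  intro u v w h1 h2 huv hvw
  cases u <;> cases v <;> cases w <;>
    simp only [pkSameLevelLt, pkLevel] at huv hvw h1 h2 <;>
    first
      | exact huv | exact hvw
      | exact hfg _ _ (h1.trans h2)
      | exact hfg _ _ (h2.symm.trans h1.symm)

def phiF (k r m : ℕ) : Fin k ⊕ Fin k → PkElem k
  | Sum.inl i => if h : i.val < k - 1 then .c ⟨i.val, h⟩ r else .x m
  | Sum.inr j => if h : j.val < k - 1 then .d ⟨j.val, h⟩ r else .y m

def phiG (k s m : ℕ) : Fin k ⊕ Fin k → PkElem k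
  | Sum.inl i => if h : i.val < k - 1 then .p ⟨i.val, h⟩ s else .y m
  | Sum.inr j => if h : j.val < k - 1 then .q ⟨j.val, h⟩ s else .x m

lemma phiF_level (k : ℕ) (f g : ℕ → ℕ) (r m : ℕ) (hr : f r = m) (u : Fin k ⊕ Fin k) :
    pkLevel k f g (phiF k r m u) = m := by
  cases u <;> simp only [phiF] <;> split <;> simp [pkLevel, hr]

lemma phiF_inj (k : ℕ) (r m : ℕ) : Function.Injective (phiF k r m) := by
  intro u v h
  cases u with
  | inl i => cases v with
    | inl i' =>
      simp only [phiF] at h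
      split at h <;> split at h <;> simp_all <;> omega
    | inr j => simp only [phiF] at h; split at h <;> split at h <;> simp_all
  | inr j => cases v with
    | inl i => simp only [phiF] at h; split at h <;> split at h <;> simp_all
    | inr j' =>
      simp only [phiF] at h
      split at h <;> split at h <;> simp_all <;> omega

lemma phiF_surj (k : ℕ) (f g : ℕ → ℕ) (hf : Function.Injective f)
    (hfg : ∀ r s, f r ≠ g s) (r m : ℕ) (hr : f r = m) (hk : 3 ≤ k) :
    ∀ z : PkElem k, pkLevel k f g z = m → ∃ u, phiF k r m u = z := by
  intro z hz
  have hk1 : ¬ ((k - 1 : ℕ) < k - 1) := by omega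
  cases z with
  | x i =>
    refine ⟨Sum.inl ⟨k - 1, by omega⟩, ?_⟩
    simp only [phiF, dif_neg hk1]
    simp [pkLevel] at hz; rw [hz]
  | y i =>
    refine ⟨Sum.inr ⟨k - 1, by omega⟩, ?_⟩
    simp only [phiF, dif_neg hk1]
    simp [pkLevel] at hz; rw [hz]
  | c j r' =>
    have : r' = r := hf (by simp [pkLevel] at hz; omega)
    subst this
    exact ⟨Sum.inl ⟨j.val, by omega⟩, by simp [phiF, j.isLt]⟩
  | d j r' =>
    have : r' = r := hf (by simp [pkLevel] at hz; omega)
    subst this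
    exact ⟨Sum.inr ⟨j.val, by omega⟩, by simp [phiF, j.isLt]⟩
  | p j s => exact absurd (hr ▸ hz) (hfg r s).symm
  | q j s => exact absurd (hr ▸ hz) (hfg r s).symm

lemma phiG_level (k : ℕ) (f g : ℕ → ℕ) (s m : ℕ) (hs : g s = m) (u : Fin k ⊕ Fin k) :
    pkLevel k f g (phiG k s m u) = m := by
  cases u <;> simp only [phiG] <;> split <;> simp [pkLevel, hs]

lemma phiG_inj (k : ℕ) (s m : ℕ) : Function.Injective (phiG k s m) := by
  intro u v h
  cases u with
  | inl i => cases v with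
    | inl i' =>
      simp only [phiG] at h
      split at h <;> split at h <;> simp_all <;> omega
    | inr j => simp only [phiG] at h; split at h <;> split at h <;> simp_all
  | inr j => cases v with
    | inl i => simp only [phiG] at h; split at h <;> split at h <;> simp_all
    | inr j' =>
      simp only [phiG] at h
      split at h <;> split at h <;> simp_all <;> omega

lemma phiG_surj (k : ℕ) (f g : ℕ → ℕ) (hg : Function.Injective g)
    (hfg : ∀ r s, f r ≠ g s) (s m : ℕ) (hs : g s = m) (hk : 3 ≤ k) :
    ∀ z : PkElem k, pkLevel k f g z = m → ∃ u, phiG k s m u = z := by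
  intro z hz
  have hk1 : ¬ ((k - 1 : ℕ) < k - 1) := by omega
  cases z with
  | x i =>
    refine ⟨Sum.inr ⟨k - 1, by omega⟩, ?_⟩
    simp only [phiG, dif_neg hk1]
    simp [pkLevel] at hz; rw [hz]
  | y i =>
    refine ⟨Sum.inl ⟨k - 1, by omega⟩, ?_⟩
    simp only [phiG, dif_neg hk1]
    simp [pkLevel] at hz; rw [hz]
  | p j s' =>
    have : s' = s := hg (by simp [pkLevel] at hz; omega)
    subst this
    exact ⟨Sum.inl ⟨j.val, by omega⟩, by simp [phiG, j.isLt]⟩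
  | q j s' =>
    have : s' = s := hg (by simp [pkLevel] at hz; omega)
    subst this
    exact ⟨Sum.inr ⟨j.val, by omega⟩, by simp [phiG, j.isLt]⟩
  | c j r => exact absurd (hs ▸ hz) (hfg r s)
  | d j r => exact absurd (hs ▸ hz) (hfg r s)

lemma phiF_order (k : ℕ) (hk : 3 ≤ k) (r m : ℕ) (u v : Fin k ⊕ Fin k) :
    FnLt k u v ↔ pkSameLevelLt k (phiF k r m u) (phiF k r m v) := by
  cases u <;> cases v <;>
    simp only [phiF] <;> split <;> split <;>
    simp_all [FnLt, pkSameLevelLt, Fin.ext_iff] <;>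
    first
      | omega
      | exact ⟨_, _, by omega, rfl, rfl⟩
      | (constructor
         · rintro ⟨i, j, hij, hi, hj⟩; omega
         · intro h; exact ⟨_, _, by omega, rfl, rfl⟩)

lemma phiG_order (k : ℕ) (hk : 3 ≤ k) (s m : ℕ) (u v : Fin k ⊕ Fin k) :
    FnLt k u v ↔ pkSameLevelLt k (phiG k s m u) (phiG k s m v) := by
  cases u <;> cases v <;>
    simp only [phiG] <;> split <;> split <;>
    simp_all [FnLt, pkSameLevelLt, Fin.ext_iff] <;>
    first
      | omega
      | exact ⟨_, _, by omega, rfl, rfl⟩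
      | (constructor
         · rintro ⟨i, j, hij, hi, hj⟩; omega
         · intro h; exact ⟨_, _, by omega, rfl, rfl⟩)

/-- For `k ≥ 3` and injective `f, g : ℕ → ℕ` with disjoint ranges, the relation `≺` on
`P^k` is a strict partial order (irreflexive and transitive); moreover each level `m`
outside `ran f ∪ ran g` is the two-element antichain `{x^m, y^m}`, and each level
`m ∈ ran f ∪ ran g` is order-isomorphic to `F k`. -/
theorem stmt17 (k : ℕ) (hk : 3 ≤ k) (f g : ℕ → ℕ)
    (hf : Function.Injective f) (hg : Function.Injective g)
    (hfg : ∀ r s, f r ≠ g s) :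
    (∀ u : PkElem k, ¬ pkLt k f g u u) ∧
    (∀ u v w : PkElem k, pkLt k f g u v → pkLt k f g v w → pkLt k f g u w) ∧
    (∀ m : ℕ, (∀ r, f r ≠ m) → (∀ s, g s ≠ m) →
      {z : PkElem k | pkLevel k f g z = m} = {PkElem.x m, PkElem.y m} ∧
        ¬ pkLt k f g (PkElem.x m) (PkElem.y m) ∧
        ¬ pkLt k f g (PkElem.y m) (PkElem.x m)) ∧
    (∀ m : ℕ, ((∃ r, f r = m) ∨ (∃ s, g s = m)) →
      ∃ e : (Fin k ⊕ Fin k) ≃ {z : PkElem k // pkLevel k f g z = m},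
        ∀ u v, FnLt k u v ↔ pkLt k f g (e u).1 (e v).1) := by
  refine ⟨pk_irrefl k f g, ?_, ?_, ?_⟩
  · intro u v w h1 h2
    rcases h1 with h1 | ⟨e1, s1⟩ <;> rcases h2 with h2 | ⟨e2, s2⟩
    · exact Or.inl (h1.trans h2)
    · exact Or.inl (e2 ▸ h1)
    · exact Or.inl (e1 ▸ h2)
    · exact (pk_same_trans k f g hfg u v w e1 e2 s1 s2).elim
  · intro m hr hs
    refine ⟨?_, ?_, ?_⟩
    · ext z
      cases z <;> simp [pkLevel, hr, hs, Set.mem_insert_iff, Set.mem_singleton_iff]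
    · simp [pkLt, pkLevel, pkSameLevelLt]
    · simp [pkLt, pkLevel, pkSameLevelLt]
  · intro m hm
    rcases hm with ⟨r, hr⟩ | ⟨s, hs⟩
    · have hφ : ∀ u, pkLevel k f g (phiF k r m u) = m := phiF_level k f g r m hr
      have hbij : Function.Bijective
          (fun u => (⟨phiF k r m u, hφ u⟩ : {z : PkElem k // pkLevel k f g z = m})) := by
        constructor
        · intro a b h
          exact phiF_inj k r m (congrArg Subtype.val h)
        · rintro ⟨z, hz⟩
          obtain ⟨u, hu⟩ := phiF_surj k f g hf hfg r m hr hk z hz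
          exact ⟨u, Subtype.ext hu⟩
      refine ⟨Equiv.ofBijective _ hbij, fun u v => ?_⟩
      simp only [Equiv.ofBijective_apply]
      rw [phiF_order k hk r m u v]
      simp [pkLt, hφ]
    · have hφ : ∀ u, pkLevel k f g (phiG k s m u) = m := phiG_level k f g s m hs
      have hbij : Function.Bijective
          (fun u => (⟨phiG k s m u, hφ u⟩ : {z : PkElem k // pkLevel k f g z = m})) := by
        constructor
        · intro a b h
          exact phiG_inj k s m (congrArg Subtype.val h)
        · rintro ⟨z, hz⟩
          obtain ⟨u, hu⟩ := phiG_surj k f g hg hfg s m hs hk z hz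
          exact ⟨u, Subtype.ext hu⟩
      refine ⟨Equiv.ofBijective _ hbij, fun u v => ?_⟩
      simp only [Equiv.ofBijective_apply]
      rw [phiG_order k hk s m u v]
      simp [pkLt, hφ]
end
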